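/- arXiv:2310.05728 — 3 statements merged into one kernel-verified Lean document; each statement's English description precedes it below -/
import Mathlib

section
/- There exists an absolute constant c > 0 with the following property. For all integers b ≥ 2 and m ≥ b with b dividing m, there exist d ≤ c·(log m / log b)² equipartitions P₁,…,P_d of [m], each consisting of m/b sets of size b, such that every permutation σ ∈ S_m can be written as σ = γ₁∘γ₂∘⋯∘γ_d where, for each i ∈ [d], the permutation γ_i is simple on P_i. The partitions P₁,…,P_d are fixed in advance: they depend only on m and b, not on σ. -/
open Finset Equiv

namespace Stmt15

variable {m : ℕ}

/-- The set of permutations preserving every fiber of the labeling `q`. -/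
def Stab (q : Fin m → ℕ) : Set (Equiv.Perm (Fin m)) := {π | ∀ x, q (π x) = q x}

/-- cardinality of the fiber of `q` over `k` -/
def fcard (q : Fin m → ℕ) (k : ℕ) : ℕ := (univ.filter fun x => q x = k).card

/-- offset of fiber `k` in the layout -/
def off (q : Fin m → ℕ) (k : ℕ) : ℕ := ∑ j ∈ range k, fcard q j

lemma off_succ (q : Fin m → ℕ) (k : ℕ) : off q (k + 1) = off q k + fcard q k := by
  simp [off, Finset.sum_range_succ]

lemma off_mono (q : Fin m → ℕ) {k k' : ℕ} (h : k ≤ k') : off q k ≤ off q k' := by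
  exact Finset.sum_le_sum_of_subset (by simpa using Finset.range_subset_range.2 h)

lemma off_le (q : Fin m → ℕ) (k : ℕ) : off q k ≤ m := by
  classical
  have : off q k = (univ.filter fun x : Fin m => q x < k).card := by
    rw [Finset.card_eq_sum_card_fiberwise (f := q) (t := range k)]
    · unfold off fcard
      refine Finset.sum_congr rfl fun j hj => ?_
      rw [Finset.filter_filter]
      congr 1
      ext x
      simp only [Finset.mem_filter, Finset.mem_univ, true_and]
      have hj' := Finset.mem_range.mp hj
      constructor
      · intro h2; exact ⟨by omega, h2⟩
      · rintro ⟨_, h2⟩; exact h2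
    · intro x hx
      simp only [Finset.mem_coe, Finset.mem_filter] at hx
      simpa using hx.2
  rw [this]
  exact le_trans (Finset.card_filter_le _ _) (by simp)

/-- index of `x` within its fiber -/
def idx (q : Fin m → ℕ) (x : Fin m) : ℕ := (univ.filter fun y => q y = q x ∧ y < x).card

lemma idx_lt (q : Fin m → ℕ) (x : Fin m) : idx q x < fcard q (q x) := by
  classical
  apply Finset.card_lt_card
  constructor
  · intro y hy
    simp only [Finset.mem_filter, Finset.mem_univ, true_and] at *
    exact hy.1
  · intro hsub
    have := hsub (by simp : x ∈ univ.filter fun y => q y = q x)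
    simp at this

lemma idx_strictMono (q : Fin m → ℕ) {x y : Fin m} (hq : q x = q y) (hxy : x < y) :
    idx q x < idx q y := by
  classical
  apply Finset.card_lt_card
  constructor
  · intro z hz
    simp only [Finset.mem_filter, Finset.mem_univ, true_and] at *
    exact ⟨hz.1.trans (hq ▸ rfl), hz.2.trans hxy⟩
  · intro hsub
    have hx : x ∈ univ.filter fun z => q z = q y ∧ z < y := by
      simp only [Finset.mem_filter, Finset.mem_univ, true_and]
      exact ⟨hq, hxy⟩
    have := hsub hx
    simp at this

/-- the layout function -/
def ordFun (q : Fin m → ℕ) (x : Fin m) : ℕ := off q (q x) + idx q x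

lemma ordFun_lt (q : Fin m → ℕ) (x : Fin m) : ordFun q x < m := by
  have h1 : ordFun q x < off q (q x + 1) := by
    rw [off_succ]; exact Nat.add_lt_add_left (idx_lt q x) _
  exact lt_of_lt_of_le h1 (off_le q _)

lemma ordFun_inj (q : Fin m → ℕ) : Function.Injective fun x => ordFun q x := by
  intro x y h
  simp only [ordFun] at h
  rcases lt_trichotomy (q x) (q y) with hlt | heq | hgt
  · exfalso
    have : ordFun q x < ordFun q y := by
      have h1 : ordFun q x < off q (q x + 1) := by
        rw [off_succ]; exact Nat.add_lt_add_left (idx_lt q x) _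
      have h2 : off q (q x + 1) ≤ off q (q y) := off_mono q hlt
      exact lt_of_lt_of_le h1 (h2.trans (Nat.le_add_right _ _))
    simp only [ordFun] at this; omega
  · rw [heq] at h
    have : idx q x = idx q y := by omega
    by_contra hne
    rcases lt_or_gt_of_ne (fun h' : x = y => hne h') with hxy | hxy
    · exact absurd this (Nat.ne_of_lt (idx_strictMono q heq hxy))
    · exact absurd this.symm (Nat.ne_of_lt (idx_strictMono q heq.symm hxy))
  · exfalso
    have : ordFun q y < ordFun q x := by
      have h1 : ordFun q y < off q (q y + 1) := by
        rw [off_succ]; exact Nat.add_lt_add_left (idx_lt q y) _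
      have h2 : off q (q y + 1) ≤ off q (q x) := off_mono q hgt
      exact lt_of_lt_of_le h1 (h2.trans (Nat.le_add_right _ _))
    simp only [ordFun] at this; omega

/-- the layout equivalence -/
noncomputable def ordE (q : Fin m → ℕ) : Equiv.Perm (Fin m) :=
  Equiv.ofBijective (fun x => (⟨ordFun q x, ordFun_lt q x⟩ : Fin m))
    ((Finite.injective_iff_bijective).mp (fun x y h => ordFun_inj q (by simpa using congrArg Fin.val h)))

lemma ordE_apply (q : Fin m → ℕ) (x : Fin m) : (ordE q x : ℕ) = ordFun q x := rfl

lemma ordE_mem (q : Fin m → ℕ) (x : Fin m) :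
    off q (q x) ≤ (ordE q x : ℕ) ∧ (ordE q x : ℕ) < off q (q x) + fcard q (q x) := by
  refine ⟨Nat.le_add_right _ _, ?_⟩
  exact Nat.add_lt_add_left (idx_lt q x) _

/-- intervals of distinct fibers are disjoint, so membership in the interval pins the fiber -/
lemma ordE_fiber (q : Fin m → ℕ) {k : ℕ} {x : Fin m}
    (h1 : off q k ≤ (ordE q x : ℕ)) (h2 : (ordE q x : ℕ) < off q k + fcard q k) :
    q x = k := by
  rcases lt_trichotomy (q x) k with hlt | heq | hgt
  · exfalso
    have := (ordE_mem q x).2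
    have h3 : off q (q x) + fcard q (q x) ≤ off q k := by
      rw [← off_succ]; exact off_mono q hlt
    omega
  · exact heq
  · exfalso
    have := (ordE_mem q x).1
    have h3 : off q k + fcard q k ≤ off q (q x) := by
      rw [← off_succ]; exact off_mono q hgt
    omega

lemma off_add_fcard_le (q : Fin m → ℕ) (k : ℕ) : off q k + fcard q k ≤ m := by
  rw [← off_succ]; exact off_le q _

/-- fiberwise counting: positions within fiber `k` relative to its offset realize `range (fcard)` -/
lemma count_fiber (q : Fin m → ℕ) (k : ℕ) (C : ℕ → Prop) [DecidablePred C] :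
    (univ.filter fun x => q x = k ∧ C ((ordE q x : ℕ) - off q k)).card
      = ((range (fcard q k)).filter C).card := by
  classical
  apply Finset.card_bij (fun x _ => (ordE q x : ℕ) - off q k)
  · intro x hx
    simp only [Finset.mem_filter, Finset.mem_univ, true_and] at hx
    obtain ⟨hk, hC⟩ := hx
    have := ordE_mem q x
    rw [hk] at this
    simp only [Finset.mem_filter, Finset.mem_range]
    exact ⟨by omega, hC⟩
  · intro x hx y hy h
    simp only [Finset.mem_filter, Finset.mem_univ, true_and] at hx hy
    have hx1 := ordE_mem q x; have hy1 := ordE_mem q y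
    rw [hx.1] at hx1; rw [hy.1] at hy1
    have : (ordE q x : ℕ) = (ordE q y : ℕ) := by omega
    exact (ordE q).injective (Fin.ext this)
  · intro n hn
    simp only [Finset.mem_filter, Finset.mem_range] at hn
    have hnm : off q k + n < m := by
      have := off_add_fcard_le q k; omega
    refine ⟨(ordE q).symm ⟨off q k + n, hnm⟩, ?_, ?_⟩
    · have hval : (ordE q ((ordE q).symm ⟨off q k + n, hnm⟩) : ℕ) = off q k + n := by
        rw [Equiv.apply_symm_apply]
      have hq : q ((ordE q).symm ⟨off q k + n, hnm⟩) = k :=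
        ordE_fiber q (by omega) (by omega)
      simp only [Finset.mem_filter, Finset.mem_univ, true_and]
      rw [hval, hq]
      simpa using hn.2
    · have hval : (ordE q ((ordE q).symm ⟨off q k + n, hnm⟩) : ℕ) = off q k + n := by
        rw [Equiv.apply_symm_apply]
      omega

/-- global counting -/
lemma count_global (q : Fin m → ℕ) (C : ℕ → Prop) [DecidablePred C] :
    (univ.filter fun x => C (ordE q x : ℕ)).card = ((range m).filter C).card := by
  classical
  apply Finset.card_bij (fun x _ => (ordE q x : ℕ))
  · intro x hx
    simp only [Finset.mem_filter, Finset.mem_univ, true_and] at hx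
    simp only [Finset.mem_filter, Finset.mem_range]
    exact ⟨(ordE q x).isLt, hx⟩
  · intro x _ y _ h
    exact (ordE q).injective (Fin.ext h)
  · intro n hn
    simp only [Finset.mem_filter, Finset.mem_range] at hn
    refine ⟨(ordE q).symm ⟨n, hn.1⟩, ?_, ?_⟩
    · simp only [Finset.mem_filter, Finset.mem_univ, true_and]
      rw [Equiv.apply_symm_apply]
      exact hn.2
    · rw [Equiv.apply_symm_apply]


lemma filter_div_eq_Ico {M b t : ℕ} (hb : 0 < b) (h : t * b + b ≤ M) :
    ((range M).filter fun n => n / b = t) = Ico (t * b) (t * b + b) := by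
  ext n
  simp only [Finset.mem_filter, Finset.mem_range, Finset.mem_Ico]
  have hbt : t * b = b * t := Nat.mul_comm t b
  constructor
  · rintro ⟨_, hd⟩
    have h1 := Nat.div_add_mod n b
    rw [hd] at h1
    have h2 := Nat.mod_lt n hb
    omega
  · rintro ⟨h1, h2⟩
    refine ⟨by omega, ?_⟩
    exact Nat.div_eq_of_lt_le (by omega) (by rw [Nat.succ_mul]; omega)

lemma card_filter_div {M b t : ℕ} (hb : 0 < b) (h : t * b + b ≤ M) :
    ((range M).filter fun n => n / b = t).card = b := by
  rw [filter_div_eq_Ico hb h, Nat.card_Ico]; omega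

lemma card_filter_div_le {a b t : ℕ} (hb : 0 < b) :
    ((range a).filter fun n => n / b = t).card ≤ b := by
  calc ((range a).filter fun n => n / b = t).card
        ≤ (Ico (t * b) (t * b + b)).card := by
          apply Finset.card_le_card
          intro n hn
          simp only [Finset.mem_filter, Finset.mem_range] at hn
          have h1 := Nat.div_add_mod n b
          rw [hn.2] at h1
          have h2 := Nat.mod_lt n hb
          have hbt : t * b = b * t := Nat.mul_comm t b
          simp only [Finset.mem_Ico]
          omega
      _ = b := by rw [Nat.card_Ico]; omega

lemma card_filter_mod_le {a b j : ℕ} (hb : 0 < b) :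
    ((range a).filter fun n => n % b = j).card ≤ (a - 1) / b + 1 := by
  have h := Finset.card_le_card_of_injOn (s := (range a).filter fun n => n % b = j) (t := range ((a - 1) / b + 1)) (fun n => n / b) ?_ ?_
  · simpa using h
  · intro n hn
    simp only [Finset.mem_coe, Finset.mem_filter, Finset.mem_range] at hn
    simp only [Finset.mem_coe, Finset.mem_range]
    have : n / b ≤ (a - 1) / b := Nat.div_le_div_right (by omega)
    omega
  · intro n hn n' hn' hd
    simp only [coe_filter, Set.mem_setOf_eq, Finset.mem_range] at hn hn'
    have hd' : n / b = n' / b := hd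
    have h1 := Nat.div_add_mod n b
    have h2 := Nat.div_add_mod n' b
    rw [hd'] at h1
    omega

/-- extension of a partial matching to a permutation supported on `S` -/
lemma perm_ext {S X Y : Finset (Fin m)} (hX : X ⊆ S) (hY : Y ⊆ S) (hcard : X.card = Y.card) :
    ∃ g : Equiv.Perm (Fin m), (∀ z, z ∉ S → g z = z) ∧ (∀ z ∈ S, g z ∈ S) ∧
      (∀ z ∈ X, g z ∈ Y) ∧ (∀ z ∈ S, z ∉ X → g z ∈ S ∧ g z ∉ Y) := by
  classical
  have hc2 : (S \ X).card = (S \ Y).card := by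
    rw [Finset.card_sdiff_of_subset hX, Finset.card_sdiff_of_subset hY, hcard]
  let e1 : {z // z ∈ X} ≃ {z // z ∈ Y} := Finset.equivOfCardEq hcard
  let e2 : {z // z ∈ S \ X} ≃ {z // z ∈ S \ Y} := Finset.equivOfCardEq hc2
  let g0 : Fin m → Fin m := fun z =>
    if hz : z ∈ X then (e1 ⟨z, hz⟩ : Fin m)
    else if hz2 : z ∈ S \ X then (e2 ⟨z, hz2⟩ : Fin m) else z
  have hmemY : ∀ z (hz : z ∈ X), g0 z = (e1 ⟨z, hz⟩ : Fin m) ∧ g0 z ∈ Y := by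
    intro z hz
    refine ⟨by simp only [g0, dif_pos hz], ?_⟩
    simp only [g0, dif_pos hz]; exact (e1 ⟨z, hz⟩).2
  have hmemSY : ∀ z (hz : z ∈ S \ X), g0 z = (e2 ⟨z, hz⟩ : Fin m) ∧ g0 z ∈ S \ Y := by
    intro z hz
    have hz' : z ∉ X := (Finset.mem_sdiff.mp hz).2
    refine ⟨by simp only [g0, dif_neg hz', dif_pos hz], ?_⟩
    simp only [g0, dif_neg hz', dif_pos hz]; exact (e2 ⟨z, hz⟩).2
  have hfix : ∀ z, z ∉ S → g0 z = z := by
    intro z hz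
    have h1 : z ∉ X := fun h => hz (hX h)
    have h2 : z ∉ S \ X := fun h => hz (Finset.mem_sdiff.mp h).1
    simp only [g0]
    rw [dif_neg h1, dif_neg h2]
  have key : ∀ z, (z ∈ X ∧ g0 z ∈ Y) ∨ (z ∈ S \ X ∧ g0 z ∈ S \ Y) ∨ (z ∉ S ∧ g0 z = z) := by
    intro z
    by_cases hz : z ∈ X
    · exact Or.inl ⟨hz, (hmemY z hz).2⟩
    · by_cases hz2 : z ∈ S
      · exact Or.inr (Or.inl ⟨Finset.mem_sdiff.mpr ⟨hz2, hz⟩,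
          (hmemSY z (Finset.mem_sdiff.mpr ⟨hz2, hz⟩)).2⟩)
      · exact Or.inr (Or.inr ⟨hz2, hfix z hz2⟩)
  have hinj : Function.Injective g0 := by
    intro z w h
    rcases key z with ⟨hz, hgz⟩ | ⟨hz, hgz⟩ | ⟨hz, hgz⟩ <;>
      rcases key w with ⟨hw, hgw⟩ | ⟨hw, hgw⟩ | ⟨hw, hgw⟩
    · rw [(hmemY z hz).1, (hmemY w hw).1] at h
      exact congrArg Subtype.val (e1.injective (Subtype.ext h))
    · exfalso; rw [h] at hgz; exact (Finset.mem_sdiff.mp hgw).2 hgz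
    · exfalso; rw [h, hgw] at hgz; exact hw (hY hgz)
    · exfalso; rw [h] at hgz; exact (Finset.mem_sdiff.mp hgz).2 hgw
    · rw [(hmemSY z hz).1, (hmemSY w hw).1] at h
      exact congrArg Subtype.val (e2.injective (Subtype.ext h))
    · exfalso; rw [h, hgw] at hgz; exact hw (Finset.mem_sdiff.mp hgz).1
    · exfalso; rw [← h, hgz] at hgw; exact hz (hY hgw)
    · exfalso; rw [← h, hgz] at hgw; exact hz (Finset.mem_sdiff.mp hgw).1
    · rw [hgz, hgw] at h; exact h
  refine ⟨Equiv.ofBijective g0 ((Finite.injective_iff_bijective).mp hinj), ?_, ?_, ?_, ?_⟩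
  · intro z hz; exact hfix z hz
  · intro z hz
    rcases key z with ⟨h1, h2⟩ | ⟨h1, h2⟩ | ⟨h1, h2⟩
    · exact hY h2
    · exact (Finset.mem_sdiff.mp h2).1
    · exact absurd hz h1
  · intro z hz; exact (hmemY z hz).2
  · intro z hz hz2
    have h3 := (hmemSY z (Finset.mem_sdiff.mpr ⟨hz, hz2⟩)).2
    exact ⟨(Finset.mem_sdiff.mp h3).1, (Finset.mem_sdiff.mp h3).2⟩



section RealDef
variable (b : ℕ)

/-- a good partition map: values below `m/b`, all fibers of size `b` -/
def Good (p : Fin m → ℕ) : Prop :=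
  (∀ x, p x < m / b) ∧ ∀ g < m / b, (univ.filter fun x => p x = g).card = b

/-- the partitions `Ps` realize every permutation in `G` as a product of simple permutations -/
def Real' (Ps : List (Fin m → ℕ)) (G : Set (Equiv.Perm (Fin m))) : Prop :=
  (∀ p ∈ Ps, Good b p) ∧ ∀ σ ∈ G, ∃ γs : List (Equiv.Perm (Fin m)),
    List.Forall₂ (fun p γ => ∀ x, p (γ x) = p x) Ps γs ∧ γs.prod = σ

lemma Real'.mono {Ps : List (Fin m → ℕ)} {G H : Set (Equiv.Perm (Fin m))}
    (h : Real' b Ps G) (hsub : H ⊆ G) : Real' b Ps H :=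
  ⟨h.1, fun σ hσ => h.2 σ (hsub hσ)⟩

lemma Real'.append {Ps Qs : List (Fin m → ℕ)} {G H : Set (Equiv.Perm (Fin m))}
    (h1 : Real' b Ps G) (h2 : Real' b Qs H) :
    Real' b (Ps ++ Qs) {σ | ∃ g ∈ G, ∃ h ∈ H, σ = g * h} := by
  constructor
  · intro p hp
    rcases List.mem_append.mp hp with h | h
    · exact h1.1 p h
    · exact h2.1 p h
  · rintro σ ⟨g, hg, h, hh, rfl⟩
    obtain ⟨γ1, hf1, hp1⟩ := h1.2 g hg
    obtain ⟨γ2, hf2, hp2⟩ := h2.2 h hh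
    exact ⟨γ1 ++ γ2, List.rel_append hf1 hf2, by rw [List.prod_append, hp1, hp2]⟩

end RealDef


/-- counting within a fiber via `idx` -/
lemma count_idx (q : Fin m → ℕ) (k : ℕ) (C : ℕ → Prop) [DecidablePred C] :
    (univ.filter fun x => q x = k ∧ C (idx q x)).card
      = ((range (fcard q k)).filter C).card := by
  classical
  apply Finset.card_bij (fun x _ => idx q x)
  · intro x hx
    simp only [Finset.mem_filter, Finset.mem_univ, true_and] at hx
    simp only [Finset.mem_filter, Finset.mem_range]
    exact ⟨hx.1 ▸ idx_lt q x, hx.2⟩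
  · intro x hx y hy h
    simp only [Finset.mem_filter, Finset.mem_univ, true_and] at hx hy
    have : ordFun q x = ordFun q y := by
      simp only [ordFun, hx.1, hy.1, h]
    exact ordFun_inj q this
  · intro n hn
    simp only [Finset.mem_filter, Finset.mem_range] at hn
    have hnm : off q k + n < m := by
      have := off_add_fcard_le q k; omega
    refine ⟨(ordE q).symm ⟨off q k + n, hnm⟩, ?_, ?_⟩
    · have hval : (ordE q ((ordE q).symm ⟨off q k + n, hnm⟩) : ℕ) = off q k + n := by
        rw [Equiv.apply_symm_apply]
      have hqk : q ((ordE q).symm ⟨off q k + n, hnm⟩) = k :=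
        ordE_fiber q (by omega) (by omega)
      have hidx : idx q ((ordE q).symm ⟨off q k + n, hnm⟩) = n := by
        have : (ordE q ((ordE q).symm ⟨off q k + n, hnm⟩) : ℕ)
            = off q (q ((ordE q).symm ⟨off q k + n, hnm⟩))
              + idx q ((ordE q).symm ⟨off q k + n, hnm⟩) := rfl
      
        rw [hval, hqk] at this
        omega
      simp only [Finset.mem_filter, Finset.mem_univ, true_and]
      rw [hidx, hqk]
      exact ⟨rfl, hn.2⟩
    · have hval : (ordE q ((ordE q).symm ⟨off q k + n, hnm⟩) : ℕ) = off q k + n := by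
        rw [Equiv.apply_symm_apply]
      have hqk : q ((ordE q).symm ⟨off q k + n, hnm⟩) = k :=
        ordE_fiber q (by omega) (by omega)
      have : (ordE q ((ordE q).symm ⟨off q k + n, hnm⟩) : ℕ)
          = off q (q ((ordE q).symm ⟨off q k + n, hnm⟩))
            + idx q ((ordE q).symm ⟨off q k + n, hnm⟩) := rfl
      rw [hval, hqk] at this
      omega

/-- transport of fiberwise counting along a fiber-preserving permutation -/
lemma card_filter_perm (q : Fin m → ℕ) (π : Equiv.Perm (Fin m))
    (hπ : ∀ x, q (π x) = q x) (k : ℕ) (P : Fin m → Prop) [DecidablePred P] :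
    (univ.filter fun x => q x = k ∧ P (π x)).card
      = (univ.filter fun x => q x = k ∧ P x).card := by
  classical
  apply Finset.card_bij (fun x _ => π x)
  · intro x hx
    simp only [Finset.mem_filter, Finset.mem_univ, true_and] at *
    exact ⟨hπ x ▸ hx.1, hx.2⟩
  · intro x _ y _ h
    exact π.injective h
  · intro y hy
    simp only [Finset.mem_filter, Finset.mem_univ, true_and] at hy
    refine ⟨π.symm y, ?_, by simp⟩
    simp only [Finset.mem_filter, Finset.mem_univ, true_and]
    constructor
    · have := hπ (π.symm y); rw [Equiv.apply_symm_apply] at this; omega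
    · rw [Equiv.apply_symm_apply]; exact hy.2

lemma count_Ico' {a lo hi : ℕ} :
    ((range a).filter fun n => lo ≤ n ∧ n < hi).card = min hi a - lo := by
  have : ((range a).filter fun n => lo ≤ n ∧ n < hi) = Ico lo (min hi a) := by
    ext n
    simp only [Finset.mem_filter, Finset.mem_range, Finset.mem_Ico]
    omega
  rw [this, Nat.card_Ico]

lemma count_lt' {a cr : ℕ} :
    ((range a).filter fun n => n < cr).card = min a cr := by
  have : ((range a).filter fun n => n < cr) = range (min a cr) := by
    ext n
    simp only [Finset.mem_filter, Finset.mem_range]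
    omega
  rw [this, Finset.card_range]

lemma count_ge' {a cr : ℕ} :
    ((range a).filter fun n => cr ≤ n).card = a - cr := by
  have : ((range a).filter fun n => cr ≤ n) = Ico cr a := by
    ext n
    simp only [Finset.mem_filter, Finset.mem_range, Finset.mem_Ico]
    omega
  rw [this, Nat.card_Ico]


section Base

/-- The heart of the base case: any fiber-preserving permutation (fibers of size `≤ b`)
is a product of three permutations, simple on the two block structures. -/
lemma base_real {b : ℕ} (hb : 2 ≤ b) (hbm : b ∣ m) (hm : 0 < m) (q : Fin m → ℕ)
    (hq : ∀ k, fcard q k ≤ b) (π : Equiv.Perm (Fin m)) (hπ : ∀ x, q (π x) = q x) :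
    ∃ γ1 γ2 γ3 : Equiv.Perm (Fin m),
      (∀ x, (ordE q (γ1 x) : ℕ) / b = (ordE q x : ℕ) / b) ∧
      (∀ x, (((ordE q (γ2 x) : ℕ) + b / 2) % m) / b = (((ordE q x : ℕ) + b / 2) % m) / b) ∧
      (∀ x, (ordE q (γ3 x) : ℕ) / b = (ordE q x : ℕ) / b) ∧
      γ3 * γ2 * γ1 = π := by
  classical
  have hb0 : 0 < b := by omega
  set cr : ℕ → ℕ := fun k => b - off q k % b with hcrdef
  set t : ℕ → ℕ :=
    fun k => (univ.filter fun x => q x = k ∧ idx q x < cr k ∧ cr k ≤ idx q (π x)).card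
    with htdef
  have hOx : ∀ x, (ordE q x : ℕ) = off q (q x) + idx q x := fun x => rfl
  have hcr_pos : ∀ k, 0 < cr k := by
    intro k; have := Nat.mod_lt (off q k) hb0; simp only [hcrdef]; omega
  have hcr_le : ∀ k, cr k ≤ b := by intro k; simp only [hcrdef]; omega
  have homod : ∀ k, off q k % b + cr k = b := by
    intro k; have := Nat.mod_lt (off q k) hb0; simp only [hcrdef]; omega
  have hidxa : ∀ x, idx q x < fcard q (q x) := fun x => idx_lt q x
  have hoa : ∀ k, off q k + fcard q k ≤ m := fun k => off_add_fcard_le q k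
  -- cardinalities
  have hA'card : ∀ k, (univ.filter fun x => q x = k ∧ idx q x < cr k).card
      = min (fcard q k) (cr k) := by
    intro k; rw [count_idx q k (fun n => n < cr k)]; exact count_lt'
  have hA''card : ∀ k, (univ.filter fun x => q x = k ∧ cr k ≤ idx q x).card
      = fcard q k - cr k := by
    intro k; rw [count_idx q k (fun n => cr k ≤ n)]; exact count_ge'
  have hX2card : ∀ k,
      (univ.filter fun x => q x = k ∧ cr k ≤ idx q x ∧ idx q (π x) < cr k).card = t k := by
    intro k
    have e1 := Finset.card_filter_add_card_filter_not
      (s := univ.filter fun x => q x = k ∧ idx q x < cr k)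
      (p := fun x => idx q (π x) < cr k)
    have r1 : (univ.filter fun x => q x = k ∧ idx q x < cr k).filter
        (fun x => idx q (π x) < cr k)
        = univ.filter (fun x => q x = k ∧ idx q x < cr k ∧ idx q (π x) < cr k) := by
      rw [Finset.filter_filter]; ext x
      simp only [Finset.mem_filter, Finset.mem_univ, true_and]; tauto
    have r2 : (univ.filter fun x => q x = k ∧ idx q x < cr k).filter
        (fun x => ¬ idx q (π x) < cr k)
        = univ.filter (fun x => q x = k ∧ idx q x < cr k ∧ cr k ≤ idx q (π x)) := by
      rw [Finset.filter_filter]; ext x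
      simp only [Finset.mem_filter, Finset.mem_univ, true_and, not_lt]; tauto
    have e2 := Finset.card_filter_add_card_filter_not
      (s := univ.filter fun x => q x = k ∧ idx q (π x) < cr k)
      (p := fun x => idx q x < cr k)
    have r3 : (univ.filter fun x => q x = k ∧ idx q (π x) < cr k).filter
        (fun x => idx q x < cr k)
        = univ.filter (fun x => q x = k ∧ idx q x < cr k ∧ idx q (π x) < cr k) := by
      rw [Finset.filter_filter]; ext x
      simp only [Finset.mem_filter, Finset.mem_univ, true_and]; tauto
    have r4 : (univ.filter fun x => q x = k ∧ idx q (π x) < cr k).filter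
        (fun x => ¬ idx q x < cr k)
        = univ.filter (fun x => q x = k ∧ cr k ≤ idx q x ∧ idx q (π x) < cr k) := by
      rw [Finset.filter_filter]; ext x
      simp only [Finset.mem_filter, Finset.mem_univ, true_and, not_lt]; tauto
    have e3 := card_filter_perm q π hπ k (P := fun z => idx q z < cr k)
    rw [r1, r2] at e1
    rw [r3, r4] at e2
    simp only [htdef]
    omega
  have ht_le_cr : ∀ k, t k ≤ cr k := by
    intro k
    have hsub : (univ.filter fun x => q x = k ∧ idx q x < cr k ∧ cr k ≤ idx q (π x))
        ⊆ (univ.filter fun x => q x = k ∧ idx q x < cr k) := by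
      intro x hx
      simp only [Finset.mem_filter, Finset.mem_univ, true_and] at *
      exact ⟨hx.1, hx.2.1⟩
    have := Finset.card_le_card hsub
    rw [hA'card k] at this
    simp only [htdef]
    omega
  have ht_le_acr : ∀ k, t k ≤ fcard q k - cr k := by
    intro k
    have hsub : (univ.filter fun x => q x = k ∧ cr k ≤ idx q x ∧ idx q (π x) < cr k)
        ⊆ (univ.filter fun x => q x = k ∧ cr k ≤ idx q x) := by
      intro x hx
      simp only [Finset.mem_filter, Finset.mem_univ, true_and] at *
      exact ⟨hx.1, hx.2.1⟩
    have h1 := Finset.card_le_card hsub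
    rw [hA''card k, hX2card k] at h1
    exact h1
  have ht_le_h : ∀ k, t k ≤ b / 2 := by
    intro k
    have h1 := ht_le_cr k; have h2 := ht_le_acr k; have h3 := hq k
    have h4 := hcr_le k
    omega
  have hY1card : ∀ k,
      (univ.filter fun x => q x = k ∧ cr k - t k ≤ idx q x ∧ idx q x < cr k).card = t k := by
    intro k
    rw [count_idx q k (fun n => cr k - t k ≤ n ∧ n < cr k), count_Ico']
    have h1 := ht_le_cr k; have h2 := ht_le_acr k
    omega
  have hY2card : ∀ k,
      (univ.filter fun x => q x = k ∧ cr k ≤ idx q x ∧ idx q x < cr k + t k).card = t k := by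
    intro k
    rw [count_idx q k (fun n => cr k ≤ n ∧ n < cr k + t k), count_Ico']
    have h1 := ht_le_cr k; have h2 := ht_le_acr k
    omega
  -- the two extension permutations for every fiber
  have hE' : ∀ k, ∃ g : Equiv.Perm (Fin m),
      (∀ z, z ∉ (univ.filter fun x => q x = k ∧ idx q x < cr k) → g z = z) ∧
      (∀ z ∈ (univ.filter fun x => q x = k ∧ idx q x < cr k),
        g z ∈ (univ.filter fun x => q x = k ∧ idx q x < cr k)) ∧
      (∀ z ∈ (univ.filter fun x => q x = k ∧ idx q x < cr k ∧ cr k ≤ idx q (π x)),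
        g z ∈ (univ.filter fun x => q x = k ∧ cr k - t k ≤ idx q x ∧ idx q x < cr k)) ∧
      (∀ z ∈ (univ.filter fun x => q x = k ∧ idx q x < cr k),
        z ∉ (univ.filter fun x => q x = k ∧ idx q x < cr k ∧ cr k ≤ idx q (π x)) →
        g z ∈ (univ.filter fun x => q x = k ∧ idx q x < cr k) ∧
        g z ∉ (univ.filter fun x => q x = k ∧ cr k - t k ≤ idx q x ∧ idx q x < cr k)) := by
    intro k
    apply perm_ext
    · intro x hx
      simp only [Finset.mem_filter, Finset.mem_univ, true_and] at *
      exact ⟨hx.1, hx.2.1⟩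
    · intro x hx
      simp only [Finset.mem_filter, Finset.mem_univ, true_and] at *
      exact ⟨hx.1, hx.2.2⟩
    · rw [hY1card k]
  have hE'' : ∀ k, ∃ g : Equiv.Perm (Fin m),
      (∀ z, z ∉ (univ.filter fun x => q x = k ∧ cr k ≤ idx q x) → g z = z) ∧
      (∀ z ∈ (univ.filter fun x => q x = k ∧ cr k ≤ idx q x),
        g z ∈ (univ.filter fun x => q x = k ∧ cr k ≤ idx q x)) ∧
      (∀ z ∈ (univ.filter fun x => q x = k ∧ cr k ≤ idx q x ∧ idx q (π x) < cr k),
        g z ∈ (univ.filter fun x => q x = k ∧ cr k ≤ idx q x ∧ idx q x < cr k + t k)) ∧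
      (∀ z ∈ (univ.filter fun x => q x = k ∧ cr k ≤ idx q x),
        z ∉ (univ.filter fun x => q x = k ∧ cr k ≤ idx q x ∧ idx q (π x) < cr k) →
        g z ∈ (univ.filter fun x => q x = k ∧ cr k ≤ idx q x) ∧
        g z ∉ (univ.filter fun x => q x = k ∧ cr k ≤ idx q x ∧ idx q x < cr k + t k)) := by
    intro k
    apply perm_ext
    · intro x hx
      simp only [Finset.mem_filter, Finset.mem_univ, true_and] at *
      exact ⟨hx.1, hx.2.1⟩
    · intro x hx
      simp only [Finset.mem_filter, Finset.mem_univ, true_and] at *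
      exact ⟨hx.1, hx.2.1⟩
    · rw [hX2card k, hY2card k]
  choose e' he'fix he'mem he'X he'nX using hE'
  choose e'' he''fix he''mem he''X he''nX using hE''
  -- γ1 : glued extension permutations
  set f1 : Fin m → Fin m := fun x => e'' (q x) (e' (q x) x) with hf1def
  have hf1A' : ∀ x, idx q x < cr (q x) →
      f1 x = e' (q x) x ∧ q (f1 x) = q x ∧ idx q (f1 x) < cr (q x) := by
    intro x hx
    have hxmem : x ∈ (univ.filter fun y => q y = q x ∧ idx q y < cr (q x)) :=
      Finset.mem_filter.mpr ⟨Finset.mem_univ x, rfl, hx⟩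
    have h1 := he'mem (q x) x hxmem
    simp only [Finset.mem_filter, Finset.mem_univ, true_and] at h1
    have h2 : e' (q x) x ∉ (univ.filter fun y => q y = q x ∧ cr (q x) ≤ idx q y) := by
      intro hmem
      rw [Finset.mem_filter] at hmem
      have h5 := hmem.2.2
      have h6 := h1.2
      omega
    have h3 : f1 x = e' (q x) x := by
      simp only [hf1def]
      rw [he''fix (q x) _ h2]
    exact ⟨h3, by rw [h3]; exact h1.1, by rw [h3]; exact h1.2⟩
  have hf1A'' : ∀ x, cr (q x) ≤ idx q x →
      f1 x = e'' (q x) x ∧ q (f1 x) = q x ∧ cr (q x) ≤ idx q (f1 x) := by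
    intro x hx
    have h2 : x ∉ (univ.filter fun y => q y = q x ∧ idx q y < cr (q x)) := by
      intro hmem
      rw [Finset.mem_filter] at hmem
      have h5 := hmem.2.2
      omega
    have h3 : f1 x = e'' (q x) x := by
      simp only [hf1def]; rw [he'fix (q x) x h2]
    have hxmem : x ∈ (univ.filter fun y => q y = q x ∧ cr (q x) ≤ idx q y) :=
      Finset.mem_filter.mpr ⟨Finset.mem_univ x, rfl, hx⟩
    have h1 := he''mem (q x) x hxmem
    simp only [Finset.mem_filter, Finset.mem_univ, true_and] at h1
    exact ⟨h3, by rw [h3]; exact h1.1, by rw [h3]; exact h1.2⟩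
  have hf1fib : ∀ x, q (f1 x) = q x := by
    intro x
    rcases lt_or_ge (idx q x) (cr (q x)) with hx | hx
    · exact (hf1A' x hx).2.1
    · exact (hf1A'' x hx).2.1
  have hf1inj : Function.Injective f1 := by
    intro x y h
    have hq1 : q x = q y := by rw [← hf1fib x, ← hf1fib y, h]
    rcases lt_or_ge (idx q x) (cr (q x)) with hx | hx <;>
      rcases lt_or_ge (idx q y) (cr (q y)) with hy | hy
    · obtain ⟨hx1, _, _⟩ := hf1A' x hx
      obtain ⟨hy1, _, _⟩ := hf1A' y hy
      rw [hx1, hy1, ← hq1] at h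
      exact (e' (q x)).injective h
    · exfalso
      obtain ⟨_, hq2, hlt⟩ := hf1A' x hx
      obtain ⟨_, hq3, hge⟩ := hf1A'' y hy
      rw [h] at hlt hq2
      rw [← hq1] at hy hge
      omega
    · exfalso
      obtain ⟨_, hq2, hge⟩ := hf1A'' x hx
      obtain ⟨_, hq3, hlt⟩ := hf1A' y hy
      rw [h] at hge hq2
      rw [← hq1] at hy hlt
      omega
    · obtain ⟨hx1, _, _⟩ := hf1A'' x hx
      obtain ⟨hy1, _, _⟩ := hf1A'' y hy
      rw [hx1, hy1, ← hq1] at h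
      exact (e'' (q x)).injective h
  set γ1 : Equiv.Perm (Fin m) :=
    Equiv.ofBijective f1 (Finite.injective_iff_bijective.mp hf1inj) with hγ1def
  have hγ1app : ∀ x, γ1 x = f1 x := fun _ => rfl
  -- block values
  have hblock1 : ∀ x, idx q x < cr (q x) → (ordE q x : ℕ) / b = off q (q x) / b := by
    intro x hx
    rw [hOx x]
    have h1 := Nat.div_add_mod (off q (q x)) b
    have h2 := homod (q x)
    have hmc : off q (q x) / b * b = b * (off q (q x) / b) := Nat.mul_comm _ _
    apply Nat.div_eq_of_lt_le
    · omega
    · rw [Nat.succ_mul]; omega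
  have hblock2 : ∀ x, cr (q x) ≤ idx q x → (ordE q x : ℕ) / b = off q (q x) / b + 1 := by
    intro x hx
    rw [hOx x]
    have h1 := Nat.div_add_mod (off q (q x)) b
    have h2 := homod (q x)
    have hmc : off q (q x) / b * b = b * (off q (q x) / b) := Nat.mul_comm _ _
    have h3 : idx q x < fcard q (q x) := hidxa x
    have h4 : fcard q (q x) ≤ b := hq (q x)
    apply Nat.div_eq_of_lt_le
    · rw [Nat.succ_mul]; omega
    · rw [Nat.succ_mul, Nat.succ_mul]; omega
  have hγ1p1 : ∀ x, (ordE q (γ1 x) : ℕ) / b = (ordE q x : ℕ) / b := by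
    intro x
    rw [hγ1app]
    rcases lt_or_ge (idx q x) (cr (q x)) with hx | hx
    · obtain ⟨_, hq1, hlt⟩ := hf1A' x hx
      rw [hblock1 x hx, hblock1 (f1 x) (by rw [hq1]; exact hlt), hq1]
    · obtain ⟨_, hq1, hge⟩ := hf1A'' x hx
      rw [hblock2 x hx, hblock2 (f1 x) (by rw [hq1]; exact hge), hq1]
  -- γ2 : the boundary involution
  set g2 : Fin m → Fin m := fun x =>
    if cr (q x) - t (q x) ≤ idx q x ∧ idx q x < cr (q x) + t (q x) then
      (ordE q).symm ⟨(off q (q x) + (2 * cr (q x) - 1 - idx q x)) % m, Nat.mod_lt _ hm⟩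
    else x with hg2def
  have hswap_pos : ∀ x, cr (q x) - t (q x) ≤ idx q x → idx q x < cr (q x) + t (q x) →
      1 ≤ t (q x) ∧ 2 * cr (q x) - 1 - idx q x < fcard q (q x) ∧
      cr (q x) - t (q x) ≤ 2 * cr (q x) - 1 - idx q x ∧
      2 * cr (q x) - 1 - idx q x < cr (q x) + t (q x) := by
    intro x h1 h2
    have h3 := ht_le_cr (q x); have h4 := ht_le_acr (q x)
    have h5 := hcr_pos (q x); have h6 := hidxa x
    omega
  have hg2swap : ∀ x, cr (q x) - t (q x) ≤ idx q x → idx q x < cr (q x) + t (q x) →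
      q (g2 x) = q x ∧ idx q (g2 x) = 2 * cr (q x) - 1 - idx q x := by
    intro x h1 h2
    obtain ⟨ht1, hpa, hp1, hp2⟩ := hswap_pos x h1 h2
    have hpos : off q (q x) + (2 * cr (q x) - 1 - idx q x) < m := by
      have := hoa (q x); omega
    have hmod : (off q (q x) + (2 * cr (q x) - 1 - idx q x)) % m
        = off q (q x) + (2 * cr (q x) - 1 - idx q x) := Nat.mod_eq_of_lt hpos
    have hval : g2 x = (ordE q).symm ⟨off q (q x) + (2 * cr (q x) - 1 - idx q x), hpos⟩ := by
      simp only [hg2def]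
      rw [if_pos ⟨h1, h2⟩]
      congr 1
      exact Fin.ext hmod
    have hOg : (ordE q (g2 x) : ℕ) = off q (q x) + (2 * cr (q x) - 1 - idx q x) := by
      rw [hval]
      rw [Equiv.apply_symm_apply]
    have hq2 : q (g2 x) = q x := by
      apply ordE_fiber q (k := q x) <;> rw [hOg]
      · omega
      · omega
    refine ⟨hq2, ?_⟩
    have := hOx (g2 x)
    rw [hOg, hq2] at this
    omega
  have hg2id : ∀ x, ¬ (cr (q x) - t (q x) ≤ idx q x ∧ idx q x < cr (q x) + t (q x)) →
      g2 x = x := by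
    intro x hx
    simp only [hg2def]
    rw [if_neg hx]
  have hg2fib : ∀ x, q (g2 x) = q x := by
    intro x
    by_cases hc : cr (q x) - t (q x) ≤ idx q x ∧ idx q x < cr (q x) + t (q x)
    · exact (hg2swap x hc.1 hc.2).1
    · rw [hg2id x hc]
  have hg2inv : Function.Involutive g2 := by
    intro x
    by_cases hc : cr (q x) - t (q x) ≤ idx q x ∧ idx q x < cr (q x) + t (q x)
    · obtain ⟨hq2, hidx2⟩ := hg2swap x hc.1 hc.2
      obtain ⟨ht1, hpa, hp1, hp2⟩ := hswap_pos x hc.1 hc.2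
      have hc2 : cr (q (g2 x)) - t (q (g2 x)) ≤ idx q (g2 x) ∧
          idx q (g2 x) < cr (q (g2 x)) + t (q (g2 x)) := by
        rw [hq2, hidx2]; exact ⟨hp1, hp2⟩
      obtain ⟨hq3, hidx3⟩ := hg2swap (g2 x) hc2.1 hc2.2
      apply (ordE q).injective
      apply Fin.ext
      rw [hOx (g2 (g2 x)), hOx x]
      rw [hq3, hq2, hidx3, hq2, hidx2]
      have h3 := ht_le_cr (q x)
      omega
    · rw [hg2id x hc, hg2id x hc]
  set γ2 : Equiv.Perm (Fin m) := ⟨g2, g2, hg2inv.leftInverse, hg2inv.rightInverse⟩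
    with hγ2def
  have hγ2app : ∀ x, γ2 x = g2 x := fun _ => rfl
  have hγ2invapp : ∀ x, γ2⁻¹ x = g2 x := fun _ => rfl
  -- simplicity of γ2 on the shifted blocks
  have hswap_block : ∀ k p, 1 ≤ t k → cr k - t k ≤ p → p < cr k + t k →
      ((off q k + p) + b / 2) % m / b = off q k / b + 1 := by
    intro k p ht1 h1 h2
    have hta := ht_le_acr k; have htc := ht_le_cr k; have hth := ht_le_h k
    have hcb := hcr_le k; have hcp := hcr_pos k
    have hmd := Nat.div_add_mod (off q k) b
    have hom := homod k
    have hmc : off q k / b * b = b * (off q k / b) := Nat.mul_comm _ _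
    obtain ⟨M, hM⟩ := hbm
    have hms : b * (off q k / b + 1) = b * (off q k / b) + b := Nat.mul_succ _ _
    have hms2 : b * (off q k / b + 2) = b * (off q k / b) + b + b := by
      rw [Nat.mul_add]; omega
    have haq : off q k + fcard q k ≤ m := hoa k
    have h5 : b * (off q k / b + 1) < b * M := by
      rw [← hM]; omega
    have h6 : off q k / b + 1 < M := Nat.lt_of_mul_lt_mul_left h5
    have h7 : b * (off q k / b + 2) ≤ b * M := Nat.mul_le_mul_left b (by omega)
    rw [← hM] at h7
    have hpos : (off q k + p) + b / 2 < m := by omega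
    rw [Nat.mod_eq_of_lt hpos]
    apply Nat.div_eq_of_lt_le
    · rw [Nat.succ_mul]; omega
    · rw [Nat.succ_mul, Nat.succ_mul]; omega
  have hγ2p2 : ∀ x, ((ordE q (γ2 x) : ℕ) + b / 2) % m / b = ((ordE q x : ℕ) + b / 2) % m / b := by
    intro x
    rw [hγ2app]
    by_cases hc : cr (q x) - t (q x) ≤ idx q x ∧ idx q x < cr (q x) + t (q x)
    · obtain ⟨hq2, hidx2⟩ := hg2swap x hc.1 hc.2
      obtain ⟨ht1, hpa, hp1, hp2⟩ := hswap_pos x hc.1 hc.2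
      rw [hOx (g2 x), hOx x, hq2, hidx2]
      rw [hswap_block (q x) _ ht1 hp1 hp2, hswap_block (q x) _ ht1 hc.1 hc.2]
    · rw [hg2id x hc]
  -- γ3 and its simplicity
  have hγ3p1 : ∀ z, (ordE q ((π * γ1⁻¹ * γ2⁻¹) z) : ℕ) / b = (ordE q z : ℕ) / b := by
    intro z
    have happly : (π * γ1⁻¹ * γ2⁻¹) z = π (γ1⁻¹ (g2 z)) := by
      rw [Equiv.Perm.mul_apply, Equiv.Perm.mul_apply, hγ2invapp]
    set y := g2 z with hydef
    set w := γ1⁻¹ y with hwdef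
    have hwy : f1 w = y := by
      rw [hwdef, ← hγ1app]
      exact Equiv.apply_symm_apply γ1 y
    have hqw : q w = q y := by rw [← hwy]; exact (hf1fib w).symm
    have hqy : q y = q z := hg2fib z
    have hzy : z = g2 y := by rw [hydef]; exact (hg2inv z).symm
    have hqwz : q w = q z := hqw.trans hqy
    rw [happly]
    have hqπw : q (π w) = q w := hπ w
    rcases lt_or_ge (idx q w) (cr (q w)) with hwz | hwz
    · by_cases hwx : cr (q w) ≤ idx q (π w)
      · -- w ∈ X1 : y ∈ Y1, z ∈ A'', π w ∈ A''
        have hwmem : w ∈ (univ.filter fun x => q x = q w ∧ idx q x < cr (q w) ∧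
            cr (q w) ≤ idx q (π x)) := by
          exact Finset.mem_filter.mpr ⟨Finset.mem_univ w, rfl, hwz, hwx⟩
        have h1 := he'X (q w) w hwmem
        simp only [Finset.mem_filter, Finset.mem_univ, true_and] at h1
        have hfw : f1 w = e' (q w) w := (hf1A' w hwz).1
        rw [← hfw, hwy] at h1
        -- h1 : q y = q w ∧ cr (q w) - t (q w) ≤ idx q y ∧ idx q y < cr (q w)
        have hysw : cr (q y) - t (q y) ≤ idx q y ∧ idx q y < cr (q y) + t (q y) := by
          rw [← hqw]
          have h3 := ht_le_cr (q w)
          exact ⟨h1.2.1, by omega⟩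
        obtain ⟨_, hidxz⟩ := hg2swap y hysw.1 hysw.2
        rw [← hzy] at hidxz
        have hzA'' : cr (q z) ≤ idx q z := by
          rw [hidxz, ← hqy, ← hqw]
          have h3 := ht_le_cr (q w)
          omega
        have hπwA'' : cr (q (π w)) ≤ idx q (π w) := by rw [hqπw]; exact hwx
        rw [hblock2 (π w) hπwA'', hblock2 z hzA'', hqπw, hqwz]
      · -- w ∈ A' \ X1 : y ∈ A' \ Y1, z = y, π w ∈ A'
        push_neg at hwx
        have hwmem : w ∈ (univ.filter fun x => q x = q w ∧ idx q x < cr (q w)) := by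
          exact Finset.mem_filter.mpr ⟨Finset.mem_univ w, rfl, hwz⟩
        have hwnot : w ∉ (univ.filter fun x => q x = q w ∧ idx q x < cr (q w) ∧
            cr (q w) ≤ idx q (π x)) := by
          intro hmem
          rw [Finset.mem_filter] at hmem
          have h5 := hmem.2.2.2
          omega
        obtain ⟨hmem2, hnot2⟩ := he'nX (q w) w hwmem hwnot
        have hfw : f1 w = e' (q w) w := (hf1A' w hwz).1
        rw [← hfw, hwy] at hmem2 hnot2
        simp only [Finset.mem_filter, Finset.mem_univ, true_and] at hmem2 hnot2
        have hyA'nY1 : idx q y < cr (q w) - t (q w) := by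
          rcases Nat.lt_or_ge (idx q y) (cr (q w) - t (q w)) with h | h
          · exact h
          · exact absurd ⟨hmem2.1, h, hmem2.2⟩ hnot2
        have hznot : ¬ (cr (q y) - t (q y) ≤ idx q y ∧ idx q y < cr (q y) + t (q y)) := by
          rw [← hqw]
          rintro ⟨hcc, _⟩; omega
        have hzy' : z = y := by rw [hzy, hg2id y hznot]
        have hzA' : idx q z < cr (q z) := by
          rw [hzy', ← hqw]
          have h3 := ht_le_cr (q w)
          omega
        have hπwA' : idx q (π w) < cr (q (π w)) := by rw [hqπw]; exact hwx
        rw [hblock1 (π w) hπwA', hblock1 z hzA', hqπw, hqwz]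
    · by_cases hwx : idx q (π w) < cr (q w)
      · -- w ∈ X2 : y ∈ Y2, z ∈ A', π w ∈ A'
        have hwmem : w ∈ (univ.filter fun x => q x = q w ∧ cr (q w) ≤ idx q x ∧
            idx q (π x) < cr (q w)) := by
          exact Finset.mem_filter.mpr ⟨Finset.mem_univ w, rfl, hwz, hwx⟩
        have h1 := he''X (q w) w hwmem
        simp only [Finset.mem_filter, Finset.mem_univ, true_and] at h1
        have hfw : f1 w = e'' (q w) w := (hf1A'' w hwz).1
        rw [← hfw, hwy] at h1
        have ht1 : 1 ≤ t (q w) := by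
          have h3 := h1.2.1; have h4 := h1.2.2; omega
        have hysw : cr (q y) - t (q y) ≤ idx q y ∧ idx q y < cr (q y) + t (q y) := by
          rw [← hqw]
          exact ⟨by omega, h1.2.2⟩
        obtain ⟨_, hidxz⟩ := hg2swap y hysw.1 hysw.2
        rw [← hzy] at hidxz
        have hzA' : idx q z < cr (q z) := by
          rw [hidxz, ← hqy, ← hqw]
          have h3 := ht_le_cr (q w)
          have h4 := h1.2.1
          omega
        have hπwA' : idx q (π w) < cr (q (π w)) := by rw [hqπw]; exact hwx
        rw [hblock1 (π w) hπwA', hblock1 z hzA', hqπw, hqwz]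
      · -- w ∈ A'' \ X2 : y ∈ A'' \ Y2, z = y, π w ∈ A''
        push_neg at hwx
        have hwmem : w ∈ (univ.filter fun x => q x = q w ∧ cr (q w) ≤ idx q x) := by
          exact Finset.mem_filter.mpr ⟨Finset.mem_univ w, rfl, hwz⟩
        have hwnot : w ∉ (univ.filter fun x => q x = q w ∧ cr (q w) ≤ idx q x ∧
            idx q (π x) < cr (q w)) := by
          intro hmem
          rw [Finset.mem_filter] at hmem
          have h5 := hmem.2.2.2
          omega
        obtain ⟨hmem2, hnot2⟩ := he''nX (q w) w hwmem hwnot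
        have hfw : f1 w = e'' (q w) w := (hf1A'' w hwz).1
        rw [← hfw, hwy] at hmem2 hnot2
        simp only [Finset.mem_filter, Finset.mem_univ, true_and] at hmem2 hnot2
        have hyge : cr (q w) + t (q w) ≤ idx q y := by
          rcases Nat.lt_or_ge (idx q y) (cr (q w) + t (q w)) with h | h
          · exact absurd ⟨hmem2.1, hmem2.2, h⟩ hnot2
          · exact h
        have hznot : ¬ (cr (q y) - t (q y) ≤ idx q y ∧ idx q y < cr (q y) + t (q y)) := by
          rw [← hqw]
          rintro ⟨_, hcc⟩; omega
        have hzy' : z = y := by rw [hzy, hg2id y hznot]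
        have hzA'' : cr (q z) ≤ idx q z := by
          rw [hzy', ← hqw]
          have h3 := ht_le_cr (q w)
          omega
        have hπwA'' : cr (q (π w)) ≤ idx q (π w) := by rw [hqπw]; exact hwx
        rw [hblock2 (π w) hπwA'', hblock2 z hzA'', hqπw, hqwz]
  refine ⟨γ1, γ2, π * γ1⁻¹ * γ2⁻¹, hγ1p1, hγ2p2, hγ3p1, ?_⟩
  group

lemma card_filter_shift {M h' : ℕ} (hM : 0 < M) (D : ℕ → Prop) [DecidablePred D] :
    ((range M).filter fun n => D ((n + h') % M)).card = ((range M).filter D).card := by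
  classical
  have hkey : ∀ y, y < M → ((y + (M - h' % M)) % M + h') % M = y := by
    intro y hyM
    rw [Nat.mod_add_mod]
    have hr : h' % M < M := Nat.mod_lt _ hM
    have hd := Nat.div_add_mod h' M
    have hms : M * (h' / M + 1) = M * (h' / M) + M := Nat.mul_succ _ _
    have heq : y + (M - h' % M) + h' = y + M * (h' / M + 1) := by omega
    rw [heq, Nat.add_mul_mod_self_left]
    exact Nat.mod_eq_of_lt hyM
  apply Finset.card_bij (fun n _ => (n + h') % M)
  · intro n hn
    simp only [Finset.mem_filter, Finset.mem_range] at *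
    exact ⟨Nat.mod_lt _ hM, hn.2⟩
  · intro n hn n2 hn2 h
    simp only [Finset.mem_filter, Finset.mem_range] at hn hn2
    have hmod : n ≡ n2 [MOD M] := Nat.ModEq.add_right_cancel' h' h
    have h2 : n % M = n2 % M := hmod
    rwa [Nat.mod_eq_of_lt hn.1, Nat.mod_eq_of_lt hn2.1] at h2
  · intro y hy
    simp only [Finset.mem_filter, Finset.mem_range] at hy
    refine ⟨(y + (M - h' % M)) % M, ?_, hkey y hy.1⟩
    simp only [Finset.mem_filter, Finset.mem_range]
    exact ⟨Nat.mod_lt _ hM, by rw [hkey y hy.1]; exact hy.2⟩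

/-- The base case: three partitions suffice for labelings with fibers of size `≤ b`. -/
lemma base {b : ℕ} (hb : 2 ≤ b) (hbm : b ∣ m) (hm : 0 < m) (q : Fin m → ℕ)
    (hq : ∀ k, fcard q k ≤ b) :
    ∃ Ps : List (Fin m → ℕ), Ps.length = 3 ∧ Real' b Ps (Stab q) := by
  classical
  have hb0 : 0 < b := by omega
  have hdiv : ∀ g, g < m / b → g * b + b ≤ m := by
    intro g hg
    have h2 := (Nat.le_div_iff_mul_le hb0).mp (by omega : g + 1 ≤ m / b)
    have h3 : (g + 1) * b = g * b + b := Nat.succ_mul _ _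
    omega
  have hgood1 : Good b (fun x : Fin m => (ordE q x : ℕ) / b) := by
    constructor
    · intro x
      exact Nat.div_lt_div_of_lt_of_dvd hbm (ordE q x).isLt
    · intro g hg
      have h1 := count_global q (fun n => n / b = g)
      have h2 := card_filter_div hb0 (hdiv g hg)
      calc (univ.filter fun x : Fin m => (ordE q x : ℕ) / b = g).card
          = ((range m).filter fun n => n / b = g).card := h1
        _ = b := h2
  have hgood2 : Good b (fun x : Fin m => ((ordE q x : ℕ) + b / 2) % m / b) := by
    constructor
    · intro x
      exact Nat.div_lt_div_of_lt_of_dvd hbm (Nat.mod_lt _ hm)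
    · intro g hg
      have h1 := count_global q (fun n => (n + b / 2) % m / b = g)
      have h0 := card_filter_shift hm (fun n => n / b = g) (h' := b / 2)
      have h2 := card_filter_div hb0 (hdiv g hg)
      calc (univ.filter fun x : Fin m => ((ordE q x : ℕ) + b / 2) % m / b = g).card
          = ((range m).filter fun n => (n + b / 2) % m / b = g).card := h1
        _ = ((range m).filter fun n => n / b = g).card := h0
        _ = b := h2
  refine ⟨[fun x => (ordE q x : ℕ) / b,
           fun x => ((ordE q x : ℕ) + b / 2) % m / b,
           fun x => (ordE q x : ℕ) / b], rfl, ?_, ?_⟩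
  · intro p hp
    simp only [List.mem_cons, List.not_mem_nil, or_false] at hp
    rcases hp with rfl | rfl | rfl
    · exact hgood1
    · exact hgood2
    · exact hgood1
  · intro σ hσ
    obtain ⟨γ1, γ2, γ3, h1, h2, h3, hprod⟩ := base_real hb hbm hm q hq σ hσ
    refine ⟨[γ3, γ2, γ1], ?_, ?_⟩
    · exact List.Forall₂.cons h3 (List.Forall₂.cons h2 (List.Forall₂.cons h1 List.Forall₂.nil))
    · simp only [List.prod_cons, List.prod_nil, mul_one]
      rw [← mul_assoc]
      exact hprod

end Base

section Hall

/-- Extract a system of distinct representatives hitting every full `u`-fiber and every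
full `v`-fiber of `A` exactly once, avoiding the special fibers. -/
lemma extract {e r : ℕ} (he : r < e) (A : Finset (Fin m)) (u v : Fin m → ℕ) (su sv : ℕ)
    (hu : ∀ n, n ≠ su → (A.filter fun x => u x = n).card = e ∨ (A.filter fun x => u x = n).card = 0)
    (hus : (A.filter fun x => u x = su).card = r)
    (hv : ∀ n, n ≠ sv → (A.filter fun x => v x = n).card = e ∨ (A.filter fun x => v x = n).card = 0)
    (hvs : (A.filter fun x => v x = sv).card = r) :
    ∃ Z : Finset (Fin m), Z ⊆ A ∧
      (∀ x ∈ Z, u x ≠ su) ∧ (∀ x ∈ Z, v x ≠ sv) ∧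
      (Set.InjOn u Z) ∧ (Set.InjOn v Z) ∧
      (∀ n, n ≠ su → (A.filter fun x => u x = n).card = e → ∃ x ∈ Z, u x = n) ∧
      (∀ n, n ≠ sv → (A.filter fun x => v x = n).card = e → ∃ x ∈ Z, v x = n) := by
  classical
  have he0 : 0 < e := by omega
  set FU := (A.image u).erase su with hFUdef
  set FV := (A.image v).erase sv with hFVdef
  have hFUfull : ∀ n ∈ FU, (A.filter fun x => u x = n).card = e := by
    intro n hn
    have hne : n ≠ su := Finset.ne_of_mem_erase hn
    rcases hu n hne with h | h
    · exact h
    · exfalso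
      obtain ⟨x, hxA, hxu⟩ := Finset.mem_image.mp (Finset.mem_of_mem_erase hn)
      have : x ∈ A.filter fun x => u x = n := Finset.mem_filter.mpr ⟨hxA, hxu⟩
      rw [Finset.card_eq_zero] at h
      rw [h] at this
      exact absurd this (Finset.notMem_empty x)
  have hFVfull : ∀ n ∈ FV, (A.filter fun x => v x = n).card = e := by
    intro n hn
    have hne : n ≠ sv := Finset.ne_of_mem_erase hn
    rcases hv n hne with h | h
    · exact h
    · exfalso
      obtain ⟨x, hxA, hxv⟩ := Finset.mem_image.mp (Finset.mem_of_mem_erase hn)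
      have : x ∈ A.filter fun x => v x = n := Finset.mem_filter.mpr ⟨hxA, hxv⟩
      rw [Finset.card_eq_zero] at h
      rw [h] at this
      exact absurd this (Finset.notMem_empty x)
  have hAcard : ∀ (w : Fin m → ℕ) (sw : ℕ) (FW : Finset ℕ), FW = (A.image w).erase sw →
      (∀ n ∈ FW, (A.filter fun x => w x = n).card = e) →
      ((A.filter fun x => w x = sw).card = r) →
      A.card = e * FW.card + r := by
    intro w sw FW hFW hfull hsw
    have h1 : A.card = ∑ n ∈ A.image w, (A.filter fun x => w x = n).card :=
      Finset.card_eq_sum_card_fiberwise (fun x hx => Finset.mem_image_of_mem w hx)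
    by_cases hmem : sw ∈ A.image w
    · have h2 : A.image w = insert sw FW := by
        rw [hFW, Finset.insert_erase hmem]
      have hnm : sw ∉ FW := by rw [hFW]; exact Finset.notMem_erase sw _
      rw [h2, Finset.sum_insert hnm] at h1
      have h3 : ∑ n ∈ FW, (A.filter fun x => w x = n).card = ∑ n ∈ FW, e :=
        Finset.sum_congr rfl fun n hn => hfull n hn
      rw [h3, Finset.sum_const, smul_eq_mul] at h1
      rw [h1, hsw]
      ring
    · have h2 : A.image w = FW := by rw [hFW, Finset.erase_eq_of_notMem hmem]
      have h0 : (A.filter fun x => w x = sw).card = 0 := by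
        rw [Finset.card_eq_zero]
        rw [Finset.eq_empty_iff_forall_notMem]
        intro x hx
        rw [Finset.mem_filter] at hx
        exact hmem (Finset.mem_image.mpr ⟨x, hx.1, hx.2⟩)
      have hr0 : r = 0 := by rw [← hsw, h0]
      rw [h2] at h1
      have h3 : ∑ n ∈ FW, (A.filter fun x => w x = n).card = ∑ n ∈ FW, e :=
        Finset.sum_congr rfl fun n hn => hfull n hn
      rw [h3, Finset.sum_const, smul_eq_mul] at h1
      rw [h1, hr0]
      ring
  have hcardU : A.card = e * FU.card + r := hAcard u su FU hFUdef hFUfull hus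
  have hcardV : A.card = e * FV.card + r := hAcard v sv FV hFVdef hFVfull hvs
  have hUVcard : FU.card = FV.card := by
    apply Nat.eq_of_mul_eq_mul_left he0
    omega
  set T : ℕ → Finset ℕ := fun n => (A.filter fun x => u x = n ∧ v x ≠ sv).image v with hTdef
  have hall : ∀ s : Finset {n // n ∈ FU}, s.card ≤ (s.biUnion fun n => T n.val).card := by
    intro s
    set B := s.image Subtype.val with hBdef
    have hBcard : B.card = s.card := Finset.card_image_of_injective s Subtype.val_injective
    set S := s.biUnion fun n => T n.val with hSdef
    have hBFU : B ⊆ FU := by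
      intro n hn
      obtain ⟨n', _, rfl⟩ := Finset.mem_image.mp hn
      exact n'.2
    have c1 : (A.filter fun x => u x ∈ B).card = e * B.card := by
      have h1 : (A.filter fun x => u x ∈ B).card
          = ∑ n ∈ B, ((A.filter fun x => u x ∈ B).filter fun x => u x = n).card :=
        Finset.card_eq_sum_card_fiberwise (fun x hx => (Finset.mem_filter.mp hx).2)
      have h2 : ∀ n ∈ B, ((A.filter fun x => u x ∈ B).filter fun x => u x = n).card = e := by
        intro n hn
        have : (A.filter fun x => u x ∈ B).filter (fun x => u x = n)
            = A.filter fun x => u x = n := by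
          rw [Finset.filter_filter]
          ext x
          simp only [Finset.mem_filter]
          constructor
          · rintro ⟨hA, _, h⟩; exact ⟨hA, h⟩
          · rintro ⟨hA, h⟩; exact ⟨hA, h ▸ hn, h⟩
        rw [this]
        exact hFUfull n (hBFU hn)
      rw [h1, Finset.sum_congr rfl h2, Finset.sum_const, smul_eq_mul]
      ring
    have c2 : (A.filter fun x => u x ∈ B).card
        ≤ (A.filter fun x => u x ∈ B ∧ v x ≠ sv).card + (A.filter fun x => v x = sv).card := by
      have hsub : (A.filter fun x => u x ∈ B)
          ⊆ (A.filter fun x => u x ∈ B ∧ v x ≠ sv) ∪ (A.filter fun x => v x = sv) := by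
        intro x hx
        rw [Finset.mem_filter] at hx
        rw [Finset.mem_union, Finset.mem_filter, Finset.mem_filter]
        by_cases hvx : v x = sv
        · exact Or.inr ⟨hx.1, hvx⟩
        · exact Or.inl ⟨hx.1, hx.2, hvx⟩
      exact le_trans (Finset.card_le_card hsub) (Finset.card_union_le _ _)
    have c3 : (A.filter fun x => u x ∈ B ∧ v x ≠ sv) ⊆ A.filter fun x => v x ∈ S := by
      intro x hx
      rw [Finset.mem_filter] at hx
      rw [Finset.mem_filter]
      refine ⟨hx.1, ?_⟩
      obtain ⟨n', hn's, hn'v⟩ := Finset.mem_image.mp hx.2.1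
      rw [hSdef, Finset.mem_biUnion]
      refine ⟨n', hn's, ?_⟩
      rw [hTdef]
      exact Finset.mem_image.mpr ⟨x, Finset.mem_filter.mpr ⟨hx.1, hn'v.symm, hx.2.2⟩, rfl⟩
    have c4 : (A.filter fun x => v x ∈ S).card ≤ e * S.card := by
      have h1 : (A.filter fun x => v x ∈ S).card
          = ∑ n ∈ S, ((A.filter fun x => v x ∈ S).filter fun x => v x = n).card :=
        Finset.card_eq_sum_card_fiberwise (fun x hx => (Finset.mem_filter.mp hx).2)
      have h2 : ∀ n ∈ S, ((A.filter fun x => v x ∈ S).filter fun x => v x = n).card ≤ e := by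
        intro n hn
        have hsub : (A.filter fun x => v x ∈ S).filter (fun x => v x = n)
            ⊆ A.filter fun x => v x = n := by
          intro x hx
          rw [Finset.mem_filter] at hx ⊢
          rw [Finset.mem_filter] at hx
          exact ⟨hx.1.1, hx.2⟩
        refine le_trans (Finset.card_le_card hsub) ?_
        have hnsv : n ≠ sv := by
          rw [hSdef, Finset.mem_biUnion] at hn
          obtain ⟨n', _, hnT⟩ := hn
          rw [hTdef] at hnT
          obtain ⟨x, hx, rfl⟩ := Finset.mem_image.mp hnT
          exact (Finset.mem_filter.mp hx).2.2
        rcases hv n hnsv with h | h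
        · omega
        · omega
      calc (A.filter fun x => v x ∈ S).card = _ := h1
        _ ≤ ∑ _n ∈ S, e := Finset.sum_le_sum h2
        _ = e * S.card := by rw [Finset.sum_const, smul_eq_mul]; ring
    have hchain : e * B.card ≤ e * S.card + r := by
      have := Finset.card_le_card c3
      omega
    by_contra hcon
    push_neg at hcon
    have hBS : S.card + 1 ≤ s.card := hcon
    have h5 : e * (S.card + 1) ≤ e * B.card := Nat.mul_le_mul_left e (by omega)
    have h6 : e * (S.card + 1) = e * S.card + e := Nat.mul_succ _ _
    omega
  obtain ⟨f, hfinj, hfT⟩ :=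
    (Finset.all_card_le_biUnion_card_iff_exists_injective (fun n : {n // n ∈ FU} => T n.val)).mp hall
  have hch : ∀ n : {n // n ∈ FU}, ∃ x, x ∈ A ∧ u x = n.val ∧ v x ≠ sv ∧ v x = f n := by
    intro n
    have := hfT n
    rw [hTdef] at this
    obtain ⟨x, hx, hvx⟩ := Finset.mem_image.mp this
    rw [Finset.mem_filter] at hx
    exact ⟨x, hx.1, hx.2.1, hx.2.2, hvx⟩
  choose xn hxA hxu hxv hxf using hch
  refine ⟨FU.attach.image xn, ?_, ?_, ?_, ?_, ?_, ?_, ?_⟩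
  · intro z hz
    obtain ⟨n, _, rfl⟩ := Finset.mem_image.mp hz
    exact hxA n
  · intro z hz
    obtain ⟨n, _, rfl⟩ := Finset.mem_image.mp hz
    rw [hxu n]
    exact Finset.ne_of_mem_erase n.2
  · intro z hz
    obtain ⟨n, _, rfl⟩ := Finset.mem_image.mp hz
    exact hxv n
  · intro z1 hz1 z2 hz2 huz
    obtain ⟨n1, _, rfl⟩ := Finset.mem_image.mp hz1
    obtain ⟨n2, _, rfl⟩ := Finset.mem_image.mp hz2
    rw [hxu n1, hxu n2] at huz
    rw [Subtype.ext huz]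
  · intro z1 hz1 z2 hz2 hvz
    obtain ⟨n1, _, rfl⟩ := Finset.mem_image.mp hz1
    obtain ⟨n2, _, rfl⟩ := Finset.mem_image.mp hz2
    rw [hxf n1, hxf n2] at hvz
    rw [hfinj hvz]
  · intro n hnsu hncard
    have hne : (A.filter fun x => u x = n).Nonempty := by
      rw [← Finset.card_pos, hncard]; omega
    obtain ⟨x, hx⟩ := hne
    rw [Finset.mem_filter] at hx
    have hnFU : n ∈ FU := by
      rw [hFUdef]
      exact Finset.mem_erase.mpr ⟨hnsu, Finset.mem_image.mpr ⟨x, hx.1, hx.2⟩⟩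
    refine ⟨xn ⟨n, hnFU⟩, Finset.mem_image.mpr ⟨⟨n, hnFU⟩, Finset.mem_attach _ _, rfl⟩, ?_⟩
    exact hxu ⟨n, hnFU⟩
  · intro n hnsv hncard
    have hne : (A.filter fun x => v x = n).Nonempty := by
      rw [← Finset.card_pos, hncard]; omega
    obtain ⟨x, hx⟩ := hne
    rw [Finset.mem_filter] at hx
    have hnFV : n ∈ FV := by
      rw [hFVdef]
      exact Finset.mem_erase.mpr ⟨hnsv, Finset.mem_image.mpr ⟨x, hx.1, hx.2⟩⟩
    -- the image of f is all of FV
    have himg : FU.attach.image f = FV := by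
      apply Finset.eq_of_subset_of_card_le
      · intro p hp
        obtain ⟨n', _, rfl⟩ := Finset.mem_image.mp hp
        rw [hFVdef]
        refine Finset.mem_erase.mpr ⟨?_, ?_⟩
        · rw [← hxf n']; exact hxv n'
        · rw [← hxf n']
          exact Finset.mem_image.mpr ⟨xn n', hxA n', rfl⟩
      · rw [Finset.card_image_of_injective _ hfinj, Finset.card_attach]
        omega
    rw [← himg] at hnFV
    obtain ⟨n', _, hfn'⟩ := Finset.mem_image.mp hnFV
    refine ⟨xn n', Finset.mem_image.mpr ⟨n', Finset.mem_attach _ _, rfl⟩, ?_⟩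
    rw [hxf n', hfn']

/-- Proper coloring of the two switch structures on each fiber. -/
lemma color : ∀ e : ℕ, ∀ r : ℕ, r ≤ e → ∀ (A : Finset (Fin m)) (u v : Fin m → ℕ) (su sv : ℕ),
    (∀ n, n ≠ su → (A.filter fun x => u x = n).card = e ∨ (A.filter fun x => u x = n).card = 0) →
    ((A.filter fun x => u x = su).card = r) →
    (∀ n, n ≠ sv → (A.filter fun x => v x = n).card = e ∨ (A.filter fun x => v x = n).card = 0) →
    ((A.filter fun x => v x = sv).card = r) →
    ∃ φ : Fin m → ℕ,
      (∀ x ∈ A, φ x < e) ∧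
      (∀ x ∈ A, u x = su → φ x < r) ∧
      (∀ x ∈ A, v x = sv → φ x < r) ∧
      (∀ x ∈ A, ∀ y ∈ A, u x = u y → φ x = φ y → x = y) ∧
      (∀ x ∈ A, ∀ y ∈ A, v x = v y → φ x = φ y → x = y) := by
  classical
  intro e
  induction e with
  | zero =>
    intro r hr A u v su sv hu hus hv hvs
    have hr0 : r = 0 := by omega
    have hA : ∀ x, x ∉ A := by
      intro x hx
      have h1 : x ∈ A.filter fun y => u y = u x := Finset.mem_filter.mpr ⟨hx, rfl⟩
      by_cases hsu : u x = su
      · rw [hsu] at h1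
        have := Finset.card_pos.mpr ⟨x, h1⟩
        omega
      · rcases hu (u x) hsu with h | h <;>
        · have := Finset.card_pos.mpr ⟨x, h1⟩
          omega
    exact ⟨fun _ => 0, fun x hx => absurd hx (hA x), fun x hx => absurd hx (hA x),
      fun x hx => absurd hx (hA x), fun x hx => absurd hx (hA x), fun x hx => absurd hx (hA x)⟩
  | succ e ih =>
    intro r hr A u v su sv hu hus hv hvs
    obtain ⟨su₀, sv₀, r₀, hr₀, hu₀, hus₀, hv₀, hvs₀, htrans⟩ :
        ∃ su₀ sv₀ r₀, r₀ < e + 1 ∧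
        (∀ n, n ≠ su₀ → (A.filter fun x => u x = n).card = e + 1 ∨
          (A.filter fun x => u x = n).card = 0) ∧
        ((A.filter fun x => u x = su₀).card = r₀) ∧
        (∀ n, n ≠ sv₀ → (A.filter fun x => v x = n).card = e + 1 ∨
          (A.filter fun x => v x = n).card = 0) ∧
        ((A.filter fun x => v x = sv₀).card = r₀) ∧
        (∀ φ : Fin m → ℕ,
          (∀ x ∈ A, φ x < e + 1) →
          (∀ x ∈ A, u x = su₀ → φ x < r₀) →
          (∀ x ∈ A, v x = sv₀ → φ x < r₀) →
          ((∀ x ∈ A, u x = su → φ x < r) ∧ (∀ x ∈ A, v x = sv → φ x < r))) := by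
      rcases Nat.lt_or_ge r (e + 1) with hlt | hge
      · exact ⟨su, sv, r, hlt, hu, hus, hv, hvs, fun φ h1 h2 h3 => ⟨h2, h3⟩⟩
      · have hre : r = e + 1 := by omega
        refine ⟨A.sup u + 1, A.sup v + 1, 0, by omega, ?_, ?_, ?_, ?_, ?_⟩
        · intro n hn
          by_cases hnsu : n = su
          · left; rw [hnsu, hus, hre]
          · exact hu n hnsu
        · rw [Finset.card_eq_zero, Finset.eq_empty_iff_forall_notMem]
          intro x hx
          rw [Finset.mem_filter] at hx
          have := Finset.le_sup (f := u) hx.1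
          omega
        · intro n hn
          by_cases hnsv : n = sv
          · left; rw [hnsv, hvs, hre]
          · exact hv n hnsv
        · rw [Finset.card_eq_zero, Finset.eq_empty_iff_forall_notMem]
          intro x hx
          rw [Finset.mem_filter] at hx
          have := Finset.le_sup (f := v) hx.1
          omega
        · intro φ h1 h2 h3
          refine ⟨fun x hx _ => ?_, fun x hx _ => ?_⟩
          · rw [hre]; exact h1 x hx
          · rw [hre]; exact h1 x hx
    obtain ⟨Z, hZA, hZsu, hZsv, hZu, hZv, hZcu, hZcv⟩ :=
      extract hr₀ A u v su₀ sv₀ hu₀ hus₀ hv₀ hvs₀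
    have hstep : ∀ (w : Fin m → ℕ) (sw : ℕ),
        (∀ n, n ≠ sw → (A.filter fun x => w x = n).card = e + 1 ∨
          (A.filter fun x => w x = n).card = 0) →
        ((A.filter fun x => w x = sw).card = r₀) →
        (∀ x ∈ Z, w x ≠ sw) →
        (Set.InjOn w ↑Z) →
        (∀ n, n ≠ sw → (A.filter fun x => w x = n).card = e + 1 → ∃ x ∈ Z, w x = n) →
        (∀ n, n ≠ sw → ((A \ Z).filter fun x => w x = n).card = e ∨
          ((A \ Z).filter fun x => w x = n).card = 0) ∧
        (((A \ Z).filter fun x => w x = sw).card = r₀) := by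
      intro w sw hw hws hZs hZinj hZcov
      constructor
      · intro n hn
        have hsplit : (A \ Z).filter (fun x => w x = n)
            = (A.filter fun x => w x = n) \ (Z.filter fun x => w x = n) := by
          ext x
          simp only [Finset.mem_filter, Finset.mem_sdiff]
          tauto
        rcases hw n hn with h | h
        · left
          have hcov := hZcov n hn h
          have hcard1 : (Z.filter fun x => w x = n).card = 1 := by
            apply le_antisymm
            · apply Finset.card_le_one.mpr
              intro a ha b hb
              rw [Finset.mem_filter] at ha hb
              exact hZinj (Finset.mem_coe.mpr ha.1) (Finset.mem_coe.mpr hb.1)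
                (ha.2.trans hb.2.symm)
            · obtain ⟨x, hxZ, hxw⟩ := hcov
              exact Finset.card_pos.mpr ⟨x, Finset.mem_filter.mpr ⟨hxZ, hxw⟩⟩
          rw [hsplit, Finset.card_sdiff_of_subset (Finset.filter_subset_filter _ hZA), h, hcard1]
          omega
        · right
          rw [Finset.card_eq_zero] at h ⊢
          rw [Finset.eq_empty_iff_forall_notMem] at h ⊢
          intro x hx
          rw [Finset.mem_filter, Finset.mem_sdiff] at hx
          exact h x (Finset.mem_filter.mpr ⟨hx.1.1, hx.2⟩)
      · have heq : (A \ Z).filter (fun x => w x = sw) = A.filter fun x => w x = sw := by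
          ext x
          simp only [Finset.mem_filter, Finset.mem_sdiff]
          constructor
          · rintro ⟨⟨h1, _⟩, h2⟩; exact ⟨h1, h2⟩
          · rintro ⟨h1, h2⟩
            exact ⟨⟨h1, fun hxZ => hZs x hxZ h2⟩, h2⟩
        rw [heq]; exact hws
    obtain ⟨hu₂, hus₂⟩ := hstep u su₀ hu₀ hus₀ hZsu hZu hZcu
    obtain ⟨hv₂, hvs₂⟩ := hstep v sv₀ hv₀ hvs₀ hZsv hZv hZcv
    obtain ⟨φ₂, hφ1, hφ2, hφ3, hφ4, hφ5⟩ :=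
      ih r₀ (by omega) (A \ Z) u v su₀ sv₀ hu₂ hus₂ hv₂ hvs₂
    set φ : Fin m → ℕ := fun x => if x ∈ Z then e else φ₂ x with hφdef
    have hm1 : ∀ x ∈ A, φ x < e + 1 := by
      intro x hx
      by_cases hxZ : x ∈ Z
      · simp only [hφdef, if_pos hxZ]; omega
      · simp only [hφdef, if_neg hxZ]
        have := hφ1 x (Finset.mem_sdiff.mpr ⟨hx, hxZ⟩)
        omega
    have hm2 : ∀ x ∈ A, u x = su₀ → φ x < r₀ := by
      intro x hx hxu
      have hxZ : x ∉ Z := fun h => hZsu x h hxu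
      simp only [hφdef, if_neg hxZ]
      exact hφ2 x (Finset.mem_sdiff.mpr ⟨hx, hxZ⟩) hxu
    have hm3 : ∀ x ∈ A, v x = sv₀ → φ x < r₀ := by
      intro x hx hxv
      have hxZ : x ∉ Z := fun h => hZsv x h hxv
      simp only [hφdef, if_neg hxZ]
      exact hφ3 x (Finset.mem_sdiff.mpr ⟨hx, hxZ⟩) hxv
    have hinju : ∀ x ∈ A, ∀ y ∈ A, u x = u y → φ x = φ y → x = y := by
      intro x hx y hy huv hφeq
      by_cases hxZ : x ∈ Z <;> by_cases hyZ : y ∈ Z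
      · exact hZu (Finset.mem_coe.mpr hxZ) (Finset.mem_coe.mpr hyZ) huv
      · exfalso
        have h1 := hφ1 y (Finset.mem_sdiff.mpr ⟨hy, hyZ⟩)
        simp only [hφdef, if_pos hxZ, if_neg hyZ] at hφeq
        omega
      · exfalso
        have h1 := hφ1 x (Finset.mem_sdiff.mpr ⟨hx, hxZ⟩)
        simp only [hφdef, if_neg hxZ, if_pos hyZ] at hφeq
        omega
      · simp only [hφdef, if_neg hxZ, if_neg hyZ] at hφeq
        exact hφ4 x (Finset.mem_sdiff.mpr ⟨hx, hxZ⟩) y (Finset.mem_sdiff.mpr ⟨hy, hyZ⟩) huv hφeq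
    have hinjv : ∀ x ∈ A, ∀ y ∈ A, v x = v y → φ x = φ y → x = y := by
      intro x hx y hy hvv hφeq
      by_cases hxZ : x ∈ Z <;> by_cases hyZ : y ∈ Z
      · exact hZv (Finset.mem_coe.mpr hxZ) (Finset.mem_coe.mpr hyZ) hvv
      · exfalso
        have h1 := hφ1 y (Finset.mem_sdiff.mpr ⟨hy, hyZ⟩)
        simp only [hφdef, if_pos hxZ, if_neg hyZ] at hφeq
        omega
      · exfalso
        have h1 := hφ1 x (Finset.mem_sdiff.mpr ⟨hx, hxZ⟩)
        simp only [hφdef, if_neg hxZ, if_pos hyZ] at hφeq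
        omega
      · simp only [hφdef, if_neg hxZ, if_neg hyZ] at hφeq
        exact hφ5 x (Finset.mem_sdiff.mpr ⟨hx, hxZ⟩) y (Finset.mem_sdiff.mpr ⟨hy, hyZ⟩) hvv hφeq
    obtain ⟨ht1, ht2⟩ := htrans φ hm1 hm2 hm3
    exact ⟨φ, hm1, ht1, ht2, hinju, hinjv⟩

end Hall

section Key
variable {b : ℕ}

/-- switch labeling -/
def wlab (b : ℕ) (q : Fin m → ℕ) (x : Fin m) : ℕ := q x * m + idx q x / b
/-- part labeling -/
def plab (b : ℕ) (q : Fin m → ℕ) (x : Fin m) : ℕ := q x * b + idx q x % b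

lemma fcard_le_m (q : Fin m → ℕ) (k : ℕ) : fcard q k ≤ m := by
  have := off_add_fcard_le q k; omega

lemma div_count_full {a b n : ℕ} (hb : 0 < b) (hn : n < a / b) :
    ((range a).filter fun j => j / b = n).card = b := by
  apply card_filter_div hb
  have h1 : (n + 1) * b ≤ (a / b) * b := Nat.mul_le_mul_right b (by omega)
  have h2 : (a / b) * b ≤ a := Nat.div_mul_le_self a b
  have h3 : (n + 1) * b = n * b + b := Nat.succ_mul _ _
  omega

lemma div_count_zero {a b n : ℕ} (hb : 0 < b) (hn : a / b < n) :
    ((range a).filter fun j => j / b = n).card = 0 := by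
  rw [Finset.card_eq_zero, Finset.eq_empty_iff_forall_notMem]
  intro j hj
  rw [Finset.mem_filter, Finset.mem_range] at hj
  have h1 : j / b ≤ a / b := Nat.div_le_div_right (by omega)
  omega

lemma div_count_last {a b : ℕ} (hb : 0 < b) :
    ((range a).filter fun j => j / b = a / b).card = a % b := by
  have heq : ((range a).filter fun j => j / b = a / b) = Ico (b * (a / b)) a := by
    ext j
    simp only [Finset.mem_filter, Finset.mem_range, Finset.mem_Ico]
    have hda := Nat.div_add_mod a b
    have hma := Nat.mod_lt a hb
    constructor
    · rintro ⟨h1, h2⟩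
      have hdj := Nat.div_add_mod j b
      rw [h2] at hdj
      omega
    · rintro ⟨h1, h2⟩
      refine ⟨h2, ?_⟩
      have hdj := Nat.div_add_mod j b
      have hmj := Nat.mod_lt j hb
      have hlo : a / b ≤ j / b := by
        have := Nat.div_le_div_right (c := b) h1
        rwa [Nat.mul_div_cancel_left _ hb] at this
      have hhi : j / b ≤ a / b := Nat.div_le_div_right (by omega)
      omega
  rw [heq, Nat.card_Ico]
  have hda := Nat.div_add_mod a b
  omega

lemma wlab_fibers (hb : 0 < b) (q : Fin m → ℕ) : ∀ K, fcard (wlab b q) K ≤ b := by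
  intro K
  have hsub : (univ.filter fun x => wlab b q x = K)
      ⊆ (univ.filter fun x => q x = K / m ∧ idx q x / b = K % m) := by
    intro x hx
    rw [Finset.mem_filter] at hx ⊢
    refine ⟨hx.1, ?_, ?_⟩
    · have h1 : idx q x / b < m := by
        have h2 := idx_lt q x
        have h3 := fcard_le_m q (q x)
        have h4 : idx q x / b ≤ idx q x := Nat.div_le_self _ _
        omega
      have h5 : wlab b q x = q x * m + idx q x / b := rfl
      have hm0 : 0 < m := x.pos
      rw [← hx.2, h5, Nat.mul_comm (q x) m, Nat.mul_add_div hm0, Nat.div_eq_of_lt h1]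
      omega
    · have h1 : idx q x / b < m := by
        have h2 := idx_lt q x
        have h3 := fcard_le_m q (q x)
        have h4 : idx q x / b ≤ idx q x := Nat.div_le_self _ _
        omega
      have h5 : wlab b q x = q x * m + idx q x / b := rfl
      rw [← hx.2, h5, Nat.mul_comm (q x) m, Nat.mul_add_mod, Nat.mod_eq_of_lt h1]
  calc fcard (wlab b q) K ≤ (univ.filter fun x => q x = K / m ∧ idx q x / b = K % m).card :=
        Finset.card_le_card hsub
    _ = ((range (fcard q (K / m))).filter fun j => j / b = K % m).card :=
        count_idx q (K / m) (fun j => j / b = K % m)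
    _ ≤ b := card_filter_div_le hb

lemma plab_fibers (hb : 0 < b) (q : Fin m → ℕ) (L : ℕ) (hL : ∀ k, fcard q k ≤ b * L) :
    ∀ K, fcard (plab b q) K ≤ L := by
  intro K
  have hsub : (univ.filter fun x => plab b q x = K)
      ⊆ (univ.filter fun x => q x = K / b ∧ idx q x % b = K % b) := by
    intro x hx
    rw [Finset.mem_filter] at hx ⊢
    have h1 : idx q x % b < b := Nat.mod_lt _ hb
    have h5 : plab b q x = q x * b + idx q x % b := rfl
    refine ⟨hx.1, ?_, ?_⟩
    · rw [← hx.2, h5, Nat.mul_comm (q x) b, Nat.mul_add_div hb, Nat.div_eq_of_lt h1]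
      omega
    · rw [← hx.2, h5, Nat.mul_comm (q x) b, Nat.mul_add_mod, Nat.mod_eq_of_lt h1]
  have hcnt : (univ.filter fun x => q x = K / b ∧ idx q x % b = K % b).card
      = ((range (fcard q (K / b))).filter fun j => j % b = K % b).card :=
    count_idx q (K / b) (fun j => j % b = K % b)
  rcases Nat.eq_zero_or_pos (fcard q (K / b)) with ha | ha
  · have : ((range (fcard q (K / b))).filter fun j => j % b = K % b).card = 0 := by
      rw [ha]; simp
    calc fcard (plab b q) K ≤ _ := Finset.card_le_card hsub
      _ = 0 := by rw [hcnt, this]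
      _ ≤ L := Nat.zero_le L
  · have hbound := card_filter_mod_le (a := fcard q (K / b)) (j := K % b) hb
    have hla := hL (K / b)
    have hdiv : (fcard q (K / b) - 1) / b + 1 ≤ L := by
      have h2 : (fcard q (K / b) - 1) / b < L := by
        rw [Nat.div_lt_iff_lt_mul hb]
        have : L * b = b * L := Nat.mul_comm _ _
        omega
      omega
    calc fcard (plab b q) K ≤ _ := Finset.card_le_card hsub
      _ ≤ (fcard q (K / b) - 1) / b + 1 := by rw [hcnt]; exact hbound
      _ ≤ L := hdiv

/-- The key decomposition: any fiber-preserving permutation is a product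
`β * μ * β'` with `β, β'` switch-simple and `μ` part-simple. -/
lemma keystep (hb : 2 ≤ b) (hm : 0 < m) (q : Fin m → ℕ) (π : Equiv.Perm (Fin m))
    (hπ : ∀ x, q (π x) = q x) :
    ∃ β μ β' : Equiv.Perm (Fin m),
      (∀ x, wlab b q (β x) = wlab b q x) ∧
      (∀ x, plab b q (μ x) = plab b q x) ∧
      (∀ x, wlab b q (β' x) = wlab b q x) ∧
      π = β * μ * β' := by
  classical
  have hb0 : 0 < b := by omega
  have hcount : ∀ k (n : ℕ),
      (((univ : Finset (Fin m)).filter fun x => q x = k).filter fun x => idx q x / b = n).card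
        = ((range (fcard q k)).filter fun j => j / b = n).card := by
    intro k n
    rw [Finset.filter_filter]
    exact count_idx q k (fun j => j / b = n)
  have hcountv : ∀ k (n : ℕ),
      (((univ : Finset (Fin m)).filter fun x => q x = k).filter fun x => idx q (π x) / b = n).card
        = ((range (fcard q k)).filter fun j => j / b = n).card := by
    intro k n
    rw [Finset.filter_filter]
    rw [card_filter_perm q π hπ k (P := fun z => idx q z / b = n)]
    exact count_idx q k (fun j => j / b = n)
  have hcolor : ∀ k, ∃ φ : Fin m → ℕ,
      (∀ x ∈ (univ : Finset (Fin m)).filter fun x => q x = k, φ x < b) ∧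
      (∀ x ∈ (univ : Finset (Fin m)).filter fun x => q x = k,
        idx q x / b = fcard q k / b → φ x < fcard q k % b) ∧
      (∀ x ∈ (univ : Finset (Fin m)).filter fun x => q x = k,
        idx q (π x) / b = fcard q k / b → φ x < fcard q k % b) ∧
      (∀ x ∈ (univ : Finset (Fin m)).filter fun x => q x = k,
        ∀ y ∈ (univ : Finset (Fin m)).filter fun x => q x = k,
        idx q x / b = idx q y / b → φ x = φ y → x = y) ∧
      (∀ x ∈ (univ : Finset (Fin m)).filter fun x => q x = k,
        ∀ y ∈ (univ : Finset (Fin m)).filter fun x => q x = k,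
        idx q (π x) / b = idx q (π y) / b → φ x = φ y → x = y) := by
    intro k
    apply color b (fcard q k % b) (le_of_lt (Nat.mod_lt _ hb0)) _ _ _
      (fcard q k / b) (fcard q k / b)
    · intro n hn
      rw [hcount k n]
      rcases Nat.lt_trichotomy n (fcard q k / b) with h | h | h
      · left; exact div_count_full hb0 h
      · exact absurd h hn
      · right; exact div_count_zero hb0 h
    · rw [hcount k _]
      exact div_count_last hb0
    · intro n hn
      rw [hcountv k n]
      rcases Nat.lt_trichotomy n (fcard q k / b) with h | h | h
      · left; exact div_count_full hb0 h
      · exact absurd h hn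
      · right; exact div_count_zero hb0 h
    · rw [hcountv k _]
      exact div_count_last hb0
  choose Φ hp1 hp2 hp3 hp4 hp5 using hcolor
  set φ : Fin m → ℕ := fun x => Φ (q x) x with hφdef
  have hmemA : ∀ x : Fin m, x ∈ (univ : Finset (Fin m)).filter fun y => q y = q x :=
    fun x => Finset.mem_filter.mpr ⟨Finset.mem_univ x, rfl⟩
  have hφb : ∀ x, φ x < b := fun x => hp1 (q x) x (hmemA x)
  -- bound for a slot (switch s, part φ) inside the fiber
  have hslot : ∀ x (j : ℕ), j < fcard q (q x) →
      (j / b = fcard q (q x) / b → φ x < fcard q (q x) % b) →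
      b * (j / b) + φ x < fcard q (q x) := by
    intro x j hj hsp
    have hdj := Nat.div_add_mod j b
    have hmj := Nat.mod_lt j hb0
    have hda := Nat.div_add_mod (fcard q (q x)) b
    have hφ := hφb x
    by_cases hfull : b * (j / b) + b ≤ fcard q (q x)
    · omega
    · have hs : j / b = fcard q (q x) / b := by
        have hlo : fcard q (q x) / b ≤ j / b := by
          have h2 : fcard q (q x) < b * (j / b + 1) := by
            have : b * (j / b + 1) = b * (j / b) + b := Nat.mul_succ _ _
            omega
          by_contra hcon
          push_neg at hcon
          have h3 : j / b + 1 ≤ fcard q (q x) / b := hcon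
          have h4 : b * (j / b + 1) ≤ b * (fcard q (q x) / b) :=
            Nat.mul_le_mul_left b h3
          omega
        have hhi : j / b ≤ fcard q (q x) / b := Nat.div_le_div_right (by omega)
        omega
      have := hsp hs
      rw [hs]
      omega
  have hOx : ∀ y : Fin m, (ordE q y : ℕ) = off q (q y) + idx q y := fun y => rfl
  -- building a point of the fiber at a prescribed relative position
  have hmk : ∀ (x : Fin m) (p : ℕ), p < fcard q (q x) →
      q ((ordE q).symm ⟨(off q (q x) + p) % m, Nat.mod_lt _ hm⟩) = q x ∧
      idx q ((ordE q).symm ⟨(off q (q x) + p) % m, Nat.mod_lt _ hm⟩) = p := by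
    intro x p hp
    have hpos : off q (q x) + p < m := by
      have := off_add_fcard_le q (q x); omega
    have hmod : (off q (q x) + p) % m = off q (q x) + p := Nat.mod_eq_of_lt hpos
    have hOv : (ordE q ((ordE q).symm ⟨(off q (q x) + p) % m, Nat.mod_lt _ hm⟩) : ℕ)
        = off q (q x) + p := by
      rw [Equiv.apply_symm_apply]
      exact hmod
    have hq2 : q ((ordE q).symm ⟨(off q (q x) + p) % m, Nat.mod_lt _ hm⟩) = q x := by
      apply ordE_fiber q (k := q x) <;> rw [hOv]
      · omega
      · omega
    refine ⟨hq2, ?_⟩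
    have h7 := hOx ((ordE q).symm ⟨(off q (q x) + p) % m, Nat.mod_lt _ hm⟩)
    rw [hOv, hq2] at h7
    omega
  set fβ' : Fin m → Fin m := fun x =>
    (ordE q).symm ⟨(off q (q x) + (b * (idx q x / b) + φ x)) % m, Nat.mod_lt _ hm⟩
    with hfβ'def
  set fν : Fin m → Fin m := fun x =>
    (ordE q).symm ⟨(off q (q x) + (b * (idx q (π x) / b) + φ x)) % m, Nat.mod_lt _ hm⟩
    with hfνdef
  have hβ'slot : ∀ x, b * (idx q x / b) + φ x < fcard q (q x) := by
    intro x
    exact hslot x (idx q x) (idx_lt q x) (fun hs => hp2 (q x) x (hmemA x) hs)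
  have hνslot : ∀ x, b * (idx q (π x) / b) + φ x < fcard q (q x) := by
    intro x
    have hππ : q (π x) = q x := hπ x
    refine hslot x (idx q (π x)) ?_ (fun hs => hp3 (q x) x (hmemA x) hs)
    have := idx_lt q (π x)
    rw [hππ] at this
    exact this
  have hβ'fact : ∀ x, q (fβ' x) = q x ∧ idx q (fβ' x) = b * (idx q x / b) + φ x :=
    fun x => hmk x _ (hβ'slot x)
  have hνfact : ∀ x, q (fν x) = q x ∧ idx q (fν x) = b * (idx q (π x) / b) + φ x :=
    fun x => hmk x _ (hνslot x)
  have hdivmod : ∀ s1 s2 c1 c2 : ℕ, c1 < b → c2 < b →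
      b * s1 + c1 = b * s2 + c2 → s1 = s2 ∧ c1 = c2 := by
    intro s1 s2 c1 c2 h1 h2 heq
    have e1 : (b * s1 + c1) / b = s1 := by
      rw [Nat.mul_add_div hb0, Nat.div_eq_of_lt h1]
      omega
    have e2 : (b * s2 + c2) / b = s2 := by
      rw [Nat.mul_add_div hb0, Nat.div_eq_of_lt h2]
      omega
    have hs : s1 = s2 := by rw [← e1, ← e2, heq]
    refine ⟨hs, ?_⟩
    rw [hs] at heq
    omega
  have hβ'inj : Function.Injective fβ' := by
    intro x y h
    have hx := hβ'fact x; have hy := hβ'fact y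
    have hqxy : q x = q y := by rw [← hx.1, ← hy.1, h]
    have hidxeq : b * (idx q x / b) + φ x = b * (idx q y / b) + φ y := by
      rw [← hx.2, ← hy.2, h]
    obtain ⟨hs, hc⟩ := hdivmod _ _ _ _ (hφb x) (hφb y) hidxeq
    simp only [hφdef] at hc
    rw [← hqxy] at hc
    exact hp4 (q x) x (hmemA x) y
      (Finset.mem_filter.mpr ⟨Finset.mem_univ y, hqxy.symm⟩) hs hc
  have hνinj : Function.Injective fν := by
    intro x y h
    have hx := hνfact x; have hy := hνfact y
    have hqxy : q x = q y := by rw [← hx.1, ← hy.1, h]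
    have hidxeq : b * (idx q (π x) / b) + φ x = b * (idx q (π y) / b) + φ y := by
      rw [← hx.2, ← hy.2, h]
    obtain ⟨hs, hc⟩ := hdivmod _ _ _ _ (hφb x) (hφb y) hidxeq
    simp only [hφdef] at hc
    rw [← hqxy] at hc
    exact hp5 (q x) x (hmemA x) y
      (Finset.mem_filter.mpr ⟨Finset.mem_univ y, hqxy.symm⟩) hs hc
  set Eβ' : Equiv.Perm (Fin m) :=
    Equiv.ofBijective fβ' (Finite.injective_iff_bijective.mp hβ'inj) with hEβ'
  set Eν : Equiv.Perm (Fin m) :=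
    Equiv.ofBijective fν (Finite.injective_iff_bijective.mp hνinj) with hEν
  refine ⟨π * Eν⁻¹, Eν * Eβ'⁻¹, Eβ', ?_, ?_, ?_, ?_⟩
  · intro z
    set x := Eν⁻¹ z with hxdef
    have hz : fν x = z := Equiv.apply_symm_apply Eν z
    have happ : (π * Eν⁻¹) z = π x := rfl
    rw [happ]
    have hfx := hνfact x
    have hqz : q z = q x := by rw [← hz]; exact hfx.1
    have hidxz : idx q z = b * (idx q (π x) / b) + φ x := by rw [← hz]; exact hfx.2
    have hdm : idx q z / b = idx q (π x) / b := by
      rw [hidxz, Nat.mul_add_div hb0, Nat.div_eq_of_lt (hφb x)]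
      omega
    simp only [wlab]
    rw [hπ x, hqz, hdm]
  · intro z
    set x := Eβ'⁻¹ z with hxdef
    have hz : fβ' x = z := Equiv.apply_symm_apply Eβ' z
    have happ : (Eν * Eβ'⁻¹) z = fν x := rfl
    rw [happ]
    have hb'f := hβ'fact x
    have hνf := hνfact x
    simp only [plab]
    rw [← hz]
    rw [hνf.1, hb'f.1, hνf.2, hb'f.2]
    have e1 : (b * (idx q (π x) / b) + φ x) % b = φ x := by
      rw [Nat.mul_add_mod, Nat.mod_eq_of_lt (hφb x)]
    have e2 : (b * (idx q x / b) + φ x) % b = φ x := by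
      rw [Nat.mul_add_mod, Nat.mod_eq_of_lt (hφb x)]
    rw [e1, e2]
  · intro x
    have hf := hβ'fact x
    have happ : Eβ' x = fβ' x := rfl
    rw [happ]
    simp only [wlab]
    rw [hf.1, hf.2]
    have e1 : (b * (idx q x / b) + φ x) / b = idx q x / b := by
      rw [Nat.mul_add_div hb0, Nat.div_eq_of_lt (hφb x)]
      omega
    rw [e1]
  · group

end Key

/-- Main induction: labelings with fibers of size `≤ b^(ℓ+1)` are realized by
`3 + 6ℓ` partitions. -/
lemma main {b : ℕ} (hb : 2 ≤ b) (hbm : b ∣ m) (hm : 0 < m) :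
    ∀ ℓ : ℕ, ∀ q : Fin m → ℕ, (∀ k, fcard q k ≤ b ^ (ℓ + 1)) →
    ∃ Ps : List (Fin m → ℕ), Ps.length = 3 + 6 * ℓ ∧ Real' b Ps (Stab q) := by
  intro ℓ
  induction ℓ with
  | zero =>
    intro q hq
    obtain ⟨Ps, h1, h2⟩ := base hb hbm hm q (by simpa using hq)
    exact ⟨Ps, by omega, h2⟩
  | succ ℓ ih =>
    intro q hq
    have hb0 : 0 < b := by omega
    obtain ⟨PsW, hW1, hW2⟩ := base hb hbm hm (wlab b q) (wlab_fibers hb0 q)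
    have hparts : ∀ K, fcard (plab b q) K ≤ b ^ (ℓ + 1) := by
      apply plab_fibers hb0 q
      intro k
      have h1 := hq k
      have h2 : b ^ (ℓ + 1 + 1) = b * b ^ (ℓ + 1) := by ring
      omega
    obtain ⟨PsP, hP1, hP2⟩ := ih (plab b q) hparts
    refine ⟨PsW ++ PsP ++ PsW, ?_, ?_⟩
    · simp only [List.length_append, hW1, hP1]
      omega
    · have h12 := Real'.append b hW2 hP2
      have h123 := Real'.append b h12 hW2
      apply Real'.mono b h123
      intro σ hσ
      obtain ⟨β, μ, β', hβ, hμ, hβ', hprod⟩ := keystep hb hm q σ hσ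
      exact ⟨β * μ, ⟨β, hβ, μ, hμ, rfl⟩, β', hβ', by rw [hprod]⟩

end Stmt15

open Stmt15 in
/-- sorting networks with large comparators.  There is an absolute
constant `c > 0` such that for all `b ≥ 2` and `m ≥ b` with `b ∣ m`, there are
`d ≤ c·(log m / log b)²` equipartitions `P₁, …, P_d` of `[m]` — fixed in advance,
depending only on `m` and `b` — each consisting of `m/b` groups of size `b` (here an
equipartition is given by its group-assignment map `P i : Fin m → Fin (m/b)`, each
fiber having size `b`), such that every permutation `σ ∈ S_m` factors as
`σ = γ₁ ∘ γ₂ ∘ ⋯ ∘ γ_d` with each `γ_i` simple on `P_i` (i.e. `γ_i` maps every group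
of `P_i` to itself). -/
theorem stmt15 :
    ∃ c : ℝ, 0 < c ∧
      ∀ b m : ℕ, 2 ≤ b → b ≤ m → b ∣ m →
        ∃ d : ℕ, (d : ℝ) ≤ c * (Real.log m / Real.log b) ^ 2 ∧
          ∃ P : Fin d → Fin m → Fin (m / b),
            (∀ (i : Fin d) (g : Fin (m / b)),
              (Finset.univ.filter (fun x => P i x = g)).card = b) ∧
            ∀ σ : Equiv.Perm (Fin m),
              ∃ γ : Fin d → Equiv.Perm (Fin m),
                (∀ (i : Fin d) (x : Fin m), P i ((γ i) x) = P i x) ∧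
                σ = (List.ofFn γ).prod := by
  classical
  refine ⟨9, by norm_num, ?_⟩
  intro b m hb hbmle hbm
  have hm : 0 < m := by omega
  obtain ⟨ℓ, hup, hpow⟩ : ∃ ℓ : ℕ, m ≤ b ^ (ℓ + 1) ∧ b ^ ℓ ≤ m := by
    by_cases hE : b ^ (Nat.log b m) = m
    · rcases Nat.eq_zero_or_pos (Nat.log b m) with h0 | hpos
      · refine ⟨0, ?_, by simpa using Nat.succ_le_of_lt hm⟩
        rw [h0] at hE
        simp at hE
        omega
      · refine ⟨Nat.log b m - 1, ?_, ?_⟩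
        · rw [show Nat.log b m - 1 + 1 = Nat.log b m by omega, hE]
        · have h3 := Nat.pow_le_pow_right (show 1 ≤ b by omega)
            (show Nat.log b m - 1 ≤ Nat.log b m by omega)
          omega
    · exact ⟨Nat.log b m, le_of_lt (Nat.lt_pow_succ_log_self hb m),
        Nat.pow_log_le_self b (by omega)⟩
  have hfib : ∀ k, fcard (fun _ : Fin m => (0 : ℕ)) k ≤ b ^ (ℓ + 1) := by
    intro k
    exact le_trans (fcard_le_m _ k) hup
  obtain ⟨Ps, hlen, hgood, hreal⟩ := main hb hbm hm ℓ (fun _ : Fin m => (0 : ℕ)) hfib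
  refine ⟨Ps.length, ?_, ?_⟩
  · -- numeric bound
    have hlogb : 0 < Real.log b := Real.log_pos (by exact_mod_cast hb)
    have hlogm : Real.log b ≤ Real.log m := by
      apply Real.log_le_log (by positivity)
      exact_mod_cast hbmle
    set x : ℝ := Real.log m / Real.log b with hx
    have hx1 : (1 : ℝ) ≤ x := by
      rw [hx, le_div_iff₀ hlogb]
      simpa using hlogm
    have hℓx : (ℓ : ℝ) ≤ x := by
      have h1 : ((b : ℝ)) ^ ℓ ≤ (m : ℝ) := by exact_mod_cast hpow
      have h2 : Real.log ((b : ℝ) ^ ℓ) ≤ Real.log m := by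
        apply Real.log_le_log (by positivity) h1
      rw [Real.log_pow] at h2
      rw [hx, le_div_iff₀ hlogb]
      exact h2
    have hcast : ((Ps.length : ℕ) : ℝ) = 3 + 6 * (ℓ : ℝ) := by
      rw [hlen]; push_cast; ring
    rw [hcast]
    nlinarith [sq_nonneg (x - 1), sq_nonneg x]
  · -- the partitions
    have hget : ∀ i : Fin Ps.length, Good b (Ps.get i) :=
      fun i => hgood (Ps.get i) (Ps.get_mem i)
    refine ⟨fun i x => ⟨Ps.get i x, (hget i).1 x⟩, ?_, ?_⟩
    · intro i g
      have heq : (Finset.univ.filter fun x : Fin m =>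
            (⟨Ps.get i x, (hget i).1 x⟩ : Fin (m / b)) = g)
          = Finset.univ.filter fun x : Fin m => Ps.get i x = (g : ℕ) := by
        ext y
        simp only [Finset.mem_filter, Finset.mem_univ, true_and, Fin.ext_iff]
      rw [heq]
      exact (hget i).2 (g : ℕ) g.isLt
    · intro σ
      have hσ : σ ∈ Stab (fun _ : Fin m => (0 : ℕ)) := fun _ => rfl
      obtain ⟨γs, hfa, hprod⟩ := hreal σ hσ
      have hlen2 : Ps.length = γs.length := hfa.length_eq
      have hpt := (List.forall₂_iff_get.mp hfa).2
      refine ⟨fun i => γs.get (Fin.cast hlen2 i), ?_, ?_⟩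
      · intro i x
        have h1 := hpt i.val i.isLt (hlen2 ▸ i.isLt) x
        apply Fin.ext
        simpa using h1
      · have hofn : (List.ofFn fun i : Fin Ps.length => γs.get (Fin.cast hlen2 i)) = γs := by
          apply List.ext_getElem
          · simp [hlen2]
          · intro n h1 h2
            simp [List.getElem_ofFn, List.get_eq_getElem]
        rw [hofn, hprod]
end

section
/- Let m and b be positive integers with b² dividing m, and let B be an (m/b)×b matrix with entries in {0,1} obtained by writing a 0-1 sequence A of length m in row-major order (B[i][j] = A[(i−1)·b + j]), where A is the concatenation of b nondecreasing runs, each of length m/b. Replace each column of B by its nondecreasing rearrangement (each column sorted independently, keeping its multiset of entries). Then in the resulting matrix: (1) every row is nondecreasing; (2) at most b rows are non-constant (i.e., contain both a 0 and a 1); (3) the non-constant rows form a contiguous interval of row indices; and (4) for any row indices i < j, the number of 1's in row i is at most the number of 1's in row j. -/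
open scoped Classical
open Finset

/-- Let `m = b·R` with `b² ∣ m` (equivalently `b ∣ R`), let
`A : ℕ → Bool` be a 0-1 sequence (`false < true`) of length `m` that is the
concatenation of `b` nondecreasing runs of length `R = m/b` each, and let `B` be the
`R × b` matrix with `B i j = A (i·b + j)` (row-major order, 0-indexed).  Let `C` be
obtained from `B` by sorting each column into nondecreasing order (so each column of
`C` is nondecreasing and has the same number of `true` entries as the corresponding
column of `B`).  Then:
1. every row of `C` is nondecreasing;
2. at most `b` rows of `C` are non-constant;
3. the non-constant rows form a contiguous interval of row indices; and
4. for row indices `i < i'`, row `i` has at most as many `true` entries as row `i'`. -/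
theorem stmt16 (b R : ℕ) (hb : 0 < b) (hR : 0 < R) (hdvd : b ∣ R)
    (A : ℕ → Bool)
    (hruns : ∀ ℓ < b, ∀ x y, ℓ * R ≤ x → x ≤ y → y < (ℓ + 1) * R → A x ≤ A y)
    (C : ℕ → ℕ → Bool)
    (hsorted : ∀ j < b, ∀ i i', i ≤ i' → i' < R → C i j ≤ C i' j)
    (hperm : ∀ j < b,
      ((Finset.range R).filter (fun i => C i j = true)).card
        = ((Finset.range R).filter (fun i => A (i * b + j) = true)).card) :
    (∀ i < R, ∀ j j', j ≤ j' → j' < b → C i j ≤ C i j') ∧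
    (((Finset.range R).filter (fun i => ∃ j < b, ∃ j' < b, C i j ≠ C i j')).card ≤ b) ∧
    (∀ i₁ i₂ i₃, i₁ ≤ i₂ → i₂ ≤ i₃ → i₃ < R →
      (∃ j < b, ∃ j' < b, C i₁ j ≠ C i₁ j') →
      (∃ j < b, ∃ j' < b, C i₃ j ≠ C i₃ j') →
      (∃ j < b, ∃ j' < b, C i₂ j ≠ C i₂ j')) ∧
    (∀ i i', i < i' → i' < R →
      ((Finset.range b).filter (fun j => C i j = true)).card
        ≤ ((Finset.range b).filter (fun j => C i' j = true)).card) := by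
  obtain ⟨k, hk⟩ := hdvd
  have hk0 : 0 < k := by
    rcases Nat.eq_zero_or_pos k with h | h
    · subst h; simp [Nat.mul_zero] at hk; omega
    · exact h
  have btrans : ∀ a c : Bool, a ≤ c → a = true → c = true := by decide
  have bfalse : ∀ a c : Bool, a ≤ c → c = false → a = false := by decide
  set t : ℕ → ℕ := fun j => ((Finset.range R).filter (fun i => A (i * b + j) = true)).card
    with ht
  have htR : ∀ j, t j ≤ R := by
    intro j
    calc t j ≤ (Finset.range R).card := Finset.card_filter_le _ _
      _ = R := Finset.card_range R
  have hCt : ∀ j < b, ((Finset.range R).filter (fun i => C i j = true)).card = t j :=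
    fun j hj => hperm j hj
  -- characterization of sorted columns
  have hchar : ∀ j < b, ∀ i < R, (C i j = true ↔ R - t j ≤ i) := by
    intro j hj i hi
    constructor
    · intro hC
      have hsub : Finset.Ico i R ⊆ (Finset.range R).filter (fun i => C i j = true) := by
        intro x hx
        simp only [Finset.mem_Ico] at hx
        simp only [Finset.mem_filter, Finset.mem_range]
        exact ⟨hx.2, btrans _ _ (hsorted j hj i x hx.1 hx.2) hC⟩
      have hcard := Finset.card_le_card hsub
      rw [Nat.card_Ico, hCt j hj] at hcard
      omega
    · intro hle
      by_contra hC
      have hC' : C i j = false := by simpa using hC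
      have hsub : (Finset.range R).filter (fun i => C i j = true) ⊆ Finset.Ico (i+1) R := by
        intro x hx
        simp only [Finset.mem_filter, Finset.mem_range] at hx
        simp only [Finset.mem_Ico]
        refine ⟨?_, hx.1⟩
        by_contra hxi
        push_neg at hxi
        have hfx := bfalse _ _ (hsorted j hj x i (by omega) hi) hC'
        rw [hx.2] at hfx; exact Bool.noConfusion hfx
      have hcard := Finset.card_le_card hsub
      rw [Nat.card_Ico, hCt j hj] at hcard
      have := htR j
      omega
  -- columns of B are pointwise monotone in j
  have hAsub : ∀ j j', j ≤ j' → j' < b →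
      (Finset.range R).filter (fun i => A (i * b + j) = true) ⊆
      (Finset.range R).filter (fun i => A (i * b + j') = true) := by
    intro j j' hjj hj' x hx
    simp only [Finset.mem_filter, Finset.mem_range] at hx ⊢
    refine ⟨hx.1, ?_⟩
    have hxR : x < R := hx.1
    set ℓ := x / k with hℓ
    have hdm : ℓ * k + x % k = x := by rw [hℓ, Nat.mul_comm]; exact Nat.div_add_mod x k
    have hmod : x % k < k := Nat.mod_lt x hk0
    have hℓb : ℓ < b := by
      by_contra hc
      push_neg at hc
      have : b * k ≤ ℓ * k := Nat.mul_le_mul_right k hc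
      omega
    have h1 : ℓ * R ≤ x * b + j := by
      have : ℓ * k ≤ x := by omega
      calc ℓ * R = (ℓ * k) * b := by rw [hk]; ring
        _ ≤ x * b := Nat.mul_le_mul_right b this
        _ ≤ x * b + j := Nat.le_add_right _ _
    have h3 : x * b + j' < (ℓ + 1) * R := by
      have hx1 : x + 1 ≤ (ℓ + 1) * k := by
        have he : (ℓ + 1) * k = ℓ * k + k := by ring
        omega
      calc x * b + j' < (x + 1) * b := by
            have he : (x + 1) * b = x * b + b := by ring
            omega
        _ ≤ ((ℓ + 1) * k) * b := Nat.mul_le_mul_right b hx1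
        _ = (ℓ + 1) * R := by rw [hk]; ring
    exact btrans _ _ (hruns ℓ hℓb (x * b + j) (x * b + j') h1 (by omega) h3) hx.2
  have tmono : ∀ j j', j ≤ j' → j' < b → t j ≤ t j' :=
    fun j j' hjj hj' => Finset.card_le_card (hAsub j j' hjj hj')
  -- part 1
  have part1 : ∀ i < R, ∀ j j', j ≤ j' → j' < b → C i j ≤ C i j' := by
    intro i hi j j' hjj hj'
    cases hC : C i j with
    | false => exact Bool.false_le _
    | true =>
      have h1 := (hchar j (lt_of_le_of_lt hjj hj') i hi).mp hC
      have h2 : C i j' = true := by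
        refine (hchar j' hj' i hi).mpr ?_
        have := tmono j j' hjj hj'
        omega
      rw [h2]
  -- characterization of non-constant rows
  have hnc : ∀ i < R, (∃ j < b, ∃ j' < b, C i j ≠ C i j') →
      C i 0 = false ∧ C i (b - 1) = true := by
    intro i hi ⟨j, hj, j', hj', hne⟩
    cases hC : C i j with
    | true =>
      have hC' : C i j' = false := by
        cases hC'' : C i j' with
        | false => rfl
        | true => rw [hC, hC''] at hne; exact absurd rfl hne
      constructor
      · exact bfalse _ _ (part1 i hi 0 j' (Nat.zero_le _) hj') hC'
      · exact btrans _ _ (part1 i hi j (b - 1) (by omega) (by omega)) hC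
    | false =>
      have hC' : C i j' = true := by
        cases hC'' : C i j' with
        | true => rfl
        | false => rw [hC, hC''] at hne; exact absurd rfl hne
      constructor
      · exact bfalse _ _ (part1 i hi 0 j (Nat.zero_le _) hj) hC
      · exact btrans _ _ (part1 i hi j' (b - 1) (by omega) (by omega)) hC'
  -- at most one non-constant row of B per run
  have key : ∀ x y, x < R → y < R → x < y → x / k = y / k →
      A (x * b + (b - 1)) = true → A (y * b + 0) = false → False := by
    intro x y hxR hyR hxy hq hAx hAy
    set ℓ := x / k with hℓ
    have hdm : ℓ * k + y % k = y := by rw [hq, Nat.mul_comm]; exact Nat.div_add_mod y k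
    have hmod : y % k < k := Nat.mod_lt y hk0
    have hℓb : ℓ < b := by
      have hle : ℓ * k ≤ x := Nat.div_mul_le_self x k
      by_contra hc
      push_neg at hc
      have : b * k ≤ ℓ * k := Nat.mul_le_mul_right k hc
      omega
    have h1 : ℓ * R ≤ x * b + (b - 1) := by
      have hle : ℓ * k ≤ x := Nat.div_mul_le_self x k
      calc ℓ * R = (ℓ * k) * b := by rw [hk]; ring
        _ ≤ x * b := Nat.mul_le_mul_right b hle
        _ ≤ x * b + (b - 1) := Nat.le_add_right _ _
    have h2 : x * b + (b - 1) ≤ y * b + 0 := by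
      have h : (x + 1) * b ≤ y * b := Nat.mul_le_mul_right b (by omega)
      have he : (x + 1) * b = x * b + b := by ring
      omega
    have h3 : y * b + 0 < (ℓ + 1) * R := by
      have hy1 : y + 1 ≤ (ℓ + 1) * k := by
        have he : (ℓ + 1) * k = ℓ * k + k := by ring
        omega
      calc y * b + 0 < (y + 1) * b := by
            have he : (y + 1) * b = y * b + b := by ring
            omega
        _ ≤ ((ℓ + 1) * k) * b := Nat.mul_le_mul_right b hy1
        _ = (ℓ + 1) * R := by rw [hk]; ring
    have := hruns ℓ hℓb (x * b + (b - 1)) (y * b + 0) h1 h2 h3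
    rw [hAx, hAy] at this
    exact absurd this (by decide)
  have hdiffcard : t (b - 1) - t 0 ≤ b := by
    have hsub0 := hAsub 0 (b - 1) (Nat.zero_le _) (by omega)
    have hsd : ((Finset.range R).filter (fun i => A (i * b + (b - 1)) = true) \
        (Finset.range R).filter (fun i => A (i * b + 0) = true)).card = t (b - 1) - t 0 :=
      Finset.card_sdiff_of_subset hsub0
    rw [← hsd]
    have : ((Finset.range R).filter (fun i => A (i * b + (b - 1)) = true) \
        (Finset.range R).filter (fun i => A (i * b + 0) = true)).card ≤
        (Finset.range b).card := by
      apply Finset.card_le_card_of_injOn (fun i => i / k)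
      · intro x hx
        simp only [Finset.mem_coe, Finset.mem_sdiff, Finset.mem_filter, Finset.mem_range] at hx
        simp only [Finset.mem_coe, Finset.mem_range]
        have hxR : x < R := hx.1.1
        have hle : x / k * k ≤ x := Nat.div_mul_le_self x k
        by_contra hc
        push_neg at hc
        have : b * k ≤ x / k * k := Nat.mul_le_mul_right k hc
        omega
      · intro x hx y hy hxy
        simp only [Finset.coe_sdiff, Set.mem_diff, Finset.mem_coe, Finset.mem_filter,
          Finset.mem_range] at hx hy
        by_contra hne
        rcases Nat.lt_or_ge x y with h | h
        · refine key x y hx.1.1 hy.1.1 h hxy hx.1.2 ?_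
          cases hA : A (y * b + 0) with
          | false => rfl
          | true => exact absurd ⟨hy.1.1, hA⟩ hy.2
        · have h' : y < x := by omega
          refine key y x hy.1.1 hx.1.1 h' hxy.symm hy.1.2 ?_
          cases hA : A (x * b + 0) with
          | false => rfl
          | true => exact absurd ⟨hx.1.1, hA⟩ hx.2
    rw [Finset.card_range] at this
    exact this
  refine ⟨part1, ?_, ?_, ?_⟩
  · -- part 2
    have hsub : (Finset.range R).filter (fun i => ∃ j < b, ∃ j' < b, C i j ≠ C i j') ⊆
        Finset.Ico (R - t (b - 1)) (R - t 0) := by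
      intro i hi
      simp only [Finset.mem_filter, Finset.mem_range] at hi
      obtain ⟨hc0, hc1⟩ := hnc i hi.1 hi.2
      simp only [Finset.mem_Ico]
      constructor
      · exact (hchar (b - 1) (by omega) i hi.1).mp hc1
      · by_contra hc
        push_neg at hc
        have := (hchar 0 hb i hi.1).mpr hc
        rw [hc0] at this; exact Bool.noConfusion this
    calc ((Finset.range R).filter (fun i => ∃ j < b, ∃ j' < b, C i j ≠ C i j')).card
        ≤ (Finset.Ico (R - t (b - 1)) (R - t 0)).card := Finset.card_le_card hsub
      _ = (R - t 0) - (R - t (b - 1)) := Nat.card_Ico _ _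
      _ ≤ b := by have := htR (b - 1); have := htR 0; omega
  · -- part 3
    intro i₁ i₂ i₃ h12 h23 h3 hne1 hne3
    obtain ⟨hc10, hc11⟩ := hnc i₁ (by omega) hne1
    obtain ⟨hc30, hc31⟩ := hnc i₃ h3 hne3
    have h2top : C i₂ (b - 1) = true :=
      btrans _ _ (hsorted (b - 1) (by omega) i₁ i₂ h12 (by omega)) hc11
    have h2bot : C i₂ 0 = false :=
      bfalse _ _ (hsorted 0 hb i₂ i₃ h23 h3) hc30
    exact ⟨0, hb, b - 1, by omega, by rw [h2bot, h2top]; exact Bool.false_ne_true⟩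
  · -- part 4
    intro i i' hii hi'
    apply Finset.card_le_card
    intro j hj
    simp only [Finset.mem_filter, Finset.mem_range] at hj ⊢
    exact ⟨hj.1, btrans _ _ (hsorted j hj.1 i i' (le_of_lt hii) hi') hj.2⟩
end

section
/- Let k ≥ 1 be an integer, θ ∈ (0,1), let Ω and M be finite nonempty sets, and let L ⊆ [k]. For each i ∈ L let ν^(i) be a probability distribution on Ω^M whose coordinate marginals ν^(i)_c (for c ∈ M) satisfy ∑_{c∈M} KL(ν^(i)_c ‖ 𝒰_Ω) ≤ θ²·|M|. Let (c_i)_{i∈[k]} be independent random variables, each uniform on M. Then Pr( |{ i ∈ L : KL(ν^(i)_{c_i} ‖ 𝒰_Ω) > θ }| ≥ k/4 ) ≤ 2^k·θ^{k/4}. -/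
open scoped Classical
open Finset

/-- KL-divergence (base-2 logarithms) between two distributions on a finite set. -/
noncomputable def KL {Ω : Type*} [Fintype Ω] (μ ν : Ω → ℝ) : ℝ :=
  ∑ x, if 0 < μ x then μ x * Real.logb 2 (μ x / ν x) else 0

/-- The uniform distribution on a finite set. -/
noncomputable def unif (Ω : Type*) [Fintype Ω] : Ω → ℝ := fun _ => 1 / (Fintype.card Ω : ℝ)

/-- The marginal distribution on `Ω` of the `c`-th coordinate of a distribution on `Ω^M`. -/
noncomputable def marg {Ω M : Type*} [Fintype Ω] [Fintype M]
    (ν : (M → Ω) → ℝ) (c : M) : Ω → ℝ :=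
  fun x => ∑ f : M → Ω, if f c = x then ν f else 0

/-!
By Gibbs' inequality every term `KL(ν^(i)_c ‖ 𝒰_Ω)` is nonnegative, so Markov's inequality turns
the bound `∑_c KL(ν^(i)_c ‖ 𝒰_Ω) ≤ θ²|M|` into: the set `B_i` of coordinates `c` with
`KL(ν^(i)_c ‖ 𝒰_Ω) > θ` has density at most `θ` in `M`. If at least `k/4` indices `i ∈ L` have
`c_i ∈ B_i`, then for some `S ⊆ L` of size `m = ⌈k/4⌉` all `c_i` with `i ∈ S` lie in `B_i`, an event
of probability at most `θ^m`; a union bound over the at most `2^k` such `S` finishes the proof.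
-/

open Fintype

section Divergence

variable {Ω : Type*} [Fintype Ω]

theorem KL_nonneg {μ ν : Ω → ℝ} (hν : ∀ x, 0 < ν x) (hsum : ∑ x, ν x ≤ ∑ x, μ x) :
    0 ≤ KL μ ν := by
  have hlog2 : 0 < Real.log 2 := Real.log_pos one_lt_two
  have hterm : ∀ x, (μ x - ν x) / Real.log 2 ≤
      if 0 < μ x then μ x * Real.logb 2 (μ x / ν x) else 0 := by
    intro x
    split_ifs with hμ
    · rw [Real.logb, ← mul_div_assoc, div_le_div_iff_of_pos_right hlog2, ← inv_div,
        Real.log_inv]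
      have h := mul_le_mul_of_nonneg_left
        (Real.log_le_sub_one_of_pos (div_pos (hν x) hμ)) hμ.le
      rw [mul_sub, mul_div_cancel₀ _ hμ.ne', mul_one] at h
      linarith
    · exact div_nonpos_of_nonpos_of_nonneg (by linarith [hν x, not_lt.mp hμ]) hlog2.le
  calc 0 ≤ ∑ x, (μ x - ν x) / Real.log 2 := by
        rw [← sum_div, sum_sub_distrib]
        exact div_nonneg (by linarith) hlog2.le
    _ ≤ KL μ ν := sum_le_sum fun x _ => hterm x

theorem unif_pos (x : Ω) : 0 < unif Ω x := by
  have : 0 < card Ω := card_pos_iff.mpr ⟨x⟩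
  unfold unif
  positivity

theorem sum_unif_le_one : ∑ x, unif Ω x ≤ 1 := by
  simp only [unif, sum_const, card_univ, nsmul_eq_mul, mul_one_div]
  exact div_self_le_one _

theorem KL_unif_nonneg {μ : Ω → ℝ} (hμ : ∑ x, μ x = 1) : 0 ≤ KL μ (unif Ω) :=
  KL_nonneg unif_pos (hμ ▸ sum_unif_le_one)

theorem sum_marg {M : Type*} [Fintype M] (ν : (M → Ω) → ℝ) (c : M) :
    ∑ x, marg ν c x = ∑ f, ν f := by
  simp only [marg]
  rw [sum_comm]
  simp

end Divergence

theorem card_filter_lt_le_of_sum_le {α : Type*} {s : Finset α} {f : α → ℝ} {t C : ℝ}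
    (ht : 0 < t) (hf : ∀ a ∈ s, 0 ≤ f a) (hsum : ∑ a ∈ s, f a ≤ t * C) :
    (#{a ∈ s | t < f a} : ℝ) ≤ C := by
  refine le_of_mul_le_mul_left ?_ ht
  calc t * #{a ∈ s | t < f a} = ∑ _a ∈ {a ∈ s | t < f a}, t := by
        rw [sum_const, nsmul_eq_mul, mul_comm]
    _ ≤ ∑ a ∈ {a ∈ s | t < f a}, f a := sum_le_sum fun a ha => (mem_filter.mp ha).2.le
    _ ≤ ∑ a ∈ s, f a :=
        sum_le_sum_of_subset_of_nonneg (filter_subset _ _) fun a ha _ => hf a ha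
    _ ≤ t * C := hsum

section Counting

variable {ι M : Type*} [Fintype ι] [DecidableEq ι] [Fintype M]

theorem card_piFinset_ite_le (S : Finset ι) (B : ι → Finset M) {p : ℝ}
    (hB : ∀ i ∈ S, (#(B i) : ℝ) ≤ p * card M) :
    (#(piFinset fun i => if i ∈ S then B i else univ) : ℝ) ≤ p ^ #S * card M ^ card ι := by
  calc (#(piFinset fun i => if i ∈ S then B i else univ) : ℝ)
      = ∏ i, if i ∈ S then (#(B i) : ℝ) else card M := by
        rw [card_piFinset]
        push_cast
        refine prod_congr rfl fun i _ => ?_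
        split_ifs <;> simp
    _ ≤ ∏ i, (if i ∈ S then p else 1) * (card M : ℝ) := by
        refine prod_le_prod (fun i _ => by split_ifs <;> positivity) fun i _ => ?_
        split_ifs with hi
        · exact hB i hi
        · simp
    _ = p ^ #S * card M ^ card ι := by
        rw [prod_mul_distrib, Fintype.prod_ite_mem, prod_const, prod_const, card_univ]

theorem card_filter_many_mem_le (L : Finset ι) (B : ι → Finset M) {p : ℝ}
    (hB : ∀ i ∈ L, (#(B i) : ℝ) ≤ p * card M) (m : ℕ) :
    (#{c : ι → M | m ≤ #{i ∈ L | c i ∈ B i}} : ℝ) ≤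
      (#L).choose m * p ^ m * card M ^ card ι := by
  have hsub : ({c : ι → M | m ≤ #{i ∈ L | c i ∈ B i}} : Finset _) ⊆
      (L.powersetCard m).biUnion fun S => piFinset fun i => if i ∈ S then B i else univ := by
    intro c hc
    obtain ⟨S, hS, hcard⟩ := exists_subset_card_eq (mem_filter.mp hc).2
    refine mem_biUnion.mpr ⟨S, mem_powersetCard.mpr ⟨hS.trans (filter_subset _ _), hcard⟩, ?_⟩
    refine mem_piFinset.mpr fun i => ?_
    split_ifs with hi
    · exact (mem_filter.mp (hS hi)).2
    · exact mem_univ _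
  calc (#{c : ι → M | m ≤ #{i ∈ L | c i ∈ B i}} : ℝ)
      ≤ ∑ S ∈ L.powersetCard m, (#(piFinset fun i => if i ∈ S then B i else univ) : ℝ) := by
        exact_mod_cast (card_le_card hsub).trans card_biUnion_le
    _ ≤ ∑ _S ∈ L.powersetCard m, p ^ m * (card M : ℝ) ^ card ι := by
        refine sum_le_sum fun S hS => ?_
        obtain ⟨hSL, rfl⟩ := mem_powersetCard.mp hS
        exact card_piFinset_ite_le S B fun i hi => hB i (hSL hi)
    _ = _ := by rw [sum_const, card_powersetCard, nsmul_eq_mul, mul_assoc]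

end Counting

theorem stmt19_general (k : ℕ) (θ : ℝ) (hθ0 : 0 < θ) (hθ1 : θ < 1)
    (Ω Mt : Type*) [Fintype Ω] [Fintype Mt]
    (L : Finset (Fin k))
    (ν : Fin k → (Mt → Ω) → ℝ)
    (hν1 : ∀ i ∈ L, ∑ f, ν i f = 1)
    (hKL : ∀ i ∈ L, ∑ c : Mt, KL (marg (ν i) c) (unif Ω) ≤ θ ^ 2 * (Fintype.card Mt : ℝ)) :
    (∑ c : Fin k → Mt,
        if (k : ℝ) / 4 ≤
            ((L.filter (fun i => θ < KL (marg (ν i) (c i)) (unif Ω))).card : ℝ)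
        then (1 : ℝ) else 0)
      / ((Fintype.card Mt : ℝ) ^ k)
      ≤ 2 ^ k * θ ^ ((k : ℝ) / 4) := by
  set B : Fin k → Finset Mt := fun i => {c | θ < KL (marg (ν i) c) (unif Ω)}
  have hB : ∀ i ∈ L, (#(B i) : ℝ) ≤ θ * card Mt := fun i hi =>
    card_filter_lt_le_of_sum_le hθ0
      (fun c _ => KL_unif_nonneg ((sum_marg _ c).trans (hν1 i hi)))
      (by rw [← mul_assoc, ← sq]; exact hKL i hi)
  set m := ⌈(k : ℝ) / 4⌉₊
  have hcount : (∑ c : Fin k → Mt, if (k : ℝ) / 4 ≤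
      ((L.filter (fun i => θ < KL (marg (ν i) (c i)) (unif Ω))).card : ℝ) then (1 : ℝ) else 0) =
      #{c : Fin k → Mt | m ≤ #{i ∈ L | c i ∈ B i}} := by
    rw [sum_boole]
    congr! 3 with c
    simp [B, m, Nat.ceil_le]
  have hchoose : ((#L).choose m : ℝ) ≤ 2 ^ k := by
    exact_mod_cast (Nat.choose_le_two_pow _ _).trans
      (Nat.pow_le_pow_right two_pos ((card_le_univ L).trans_eq (Fintype.card_fin k)))
  have hθm : θ ^ m ≤ θ ^ ((k : ℝ) / 4) := by
    rw [← Real.rpow_natCast]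
    exact Real.rpow_le_rpow_of_exponent_ge hθ0 hθ1.le (Nat.le_ceil _)
  rw [hcount]
  refine div_le_of_le_mul₀ (by positivity) (by positivity) ?_
  calc _ ≤ (#L).choose m * θ ^ m * (card Mt : ℝ) ^ k := by
        simpa using card_filter_many_mem_le L B hB m
    _ ≤ 2 ^ k * θ ^ ((k : ℝ) / 4) * (card Mt : ℝ) ^ k := by gcongr

/-- If for every `i ∈ L` the coordinate marginals of `ν^{(i)}` satisfy
`∑_{c∈M} KL(ν^{(i)}_c ‖ 𝒰_Ω) ≤ θ²·|M|`, and `(c_i)` are independent uniform on `M`, then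
`Pr(|{i ∈ L : KL(ν^{(i)}_{c_i} ‖ 𝒰_Ω) > θ}| ≥ k/4) ≤ 2^k·θ^{k/4}`. -/
theorem stmt19 (k : ℕ) (hk : 1 ≤ k) (θ : ℝ) (hθ0 : 0 < θ) (hθ1 : θ < 1)
    (Ω Mt : Type*) [Fintype Ω] [Nonempty Ω] [Fintype Mt] [Nonempty Mt]
    (L : Finset (Fin k))
    (ν : Fin k → (Mt → Ω) → ℝ)
    (hν0 : ∀ i ∈ L, ∀ f, 0 ≤ ν i f) (hν1 : ∀ i ∈ L, ∑ f, ν i f = 1)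
    (hKL : ∀ i ∈ L, ∑ c : Mt, KL (marg (ν i) c) (unif Ω) ≤ θ ^ 2 * (Fintype.card Mt : ℝ)) :
    (∑ c : Fin k → Mt,
        if (k : ℝ) / 4 ≤
            ((L.filter (fun i => θ < KL (marg (ν i) (c i)) (unif Ω))).card : ℝ)
        then (1 : ℝ) else 0)
      / ((Fintype.card Mt : ℝ) ^ k)
      ≤ 2 ^ k * θ ^ ((k : ℝ) / 4) :=
  stmt19_general k θ hθ0 hθ1 Ω Mt L ν hν1 hKL
end
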